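/- arXiv:2306.00033 — 6 statements merged into one kernel-verified Lean document; each statement's English description precedes it below -/
import Mathlib

section
/- For every integer n > 1, the set S_n(132, 231) of permutations of {1,...,n} avoiding both patterns 132 and 231 is sign-balanced, i.e., it contains equally many even and odd permutations. -/
/-- Number of inversions of a permutation: pairs `i < j` with `π j < π i`. -/
def invCount {n : ℕ} (π : Equiv.Perm (Fin n)) : ℕ :=
  (Finset.univ.filter (fun p : Fin n × Fin n => p.1 < p.2 ∧ π p.2 < π p.1)).card

/-- Number of noninversions: pairs `i < j` with `π i < π j`. -/
def nonInvCount {n : ℕ} (π : Equiv.Perm (Fin n)) : ℕ :=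
  (Finset.univ.filter (fun p : Fin n × Fin n => p.1 < p.2 ∧ π p.1 < π p.2)).card

/-- `π` contains the pattern `σ`. -/
def Contains {n k : ℕ} (π : Equiv.Perm (Fin n)) (σ : Equiv.Perm (Fin k)) : Prop :=
  ∃ f : Fin k → Fin n, StrictMono f ∧ ∀ s t : Fin k, σ s < σ t ↔ π (f s) < π (f t)

/-- `π` avoids the pattern `σ`. -/
def Avoids {n k : ℕ} (π : Equiv.Perm (Fin n)) (σ : Equiv.Perm (Fin k)) : Prop :=
  ¬ Contains π σ

/-- `S_n(R)`: permutations of length `n` avoiding every pattern in `R`. -/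
def avoidSet (n : ℕ) {k : ℕ} (R : Set (Equiv.Perm (Fin k))) : Set (Equiv.Perm (Fin n)) :=
  {π | ∀ σ ∈ R, Avoids π σ}

/-- A set of permutations is sign-balanced if it has equally many even and odd members. -/
def SignBalanced {n : ℕ} (S : Set (Equiv.Perm (Fin n))) : Prop :=
  {π ∈ S | Even (invCount π)}.ncard = {π ∈ S | ¬ Even (invCount π)}.ncard

/-- The order-reversing permutation `i ↦ n+1-i`. Composing on the right gives the
reversal of a permutation; composing on the left gives its complement. -/
def revPerm {n : ℕ} : Equiv.Perm (Fin n) :=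
  ⟨Fin.rev, Fin.rev, fun i => Fin.rev_rev i, fun i => Fin.rev_rev i⟩

/-- Direct sum `σ ⊕ π` of permutations. -/
def directSum {l m : ℕ} (σ : Equiv.Perm (Fin l)) (π : Equiv.Perm (Fin m)) :
    Equiv.Perm (Fin (l + m)) :=
  finSumFinEquiv.symm.trans ((Equiv.sumCongr σ π).trans finSumFinEquiv)

/-- Skew sum `σ ⊖ π` of permutations. -/
def skewSum {l m : ℕ} (σ : Equiv.Perm (Fin l)) (π : Equiv.Perm (Fin m)) :
    Equiv.Perm (Fin (l + m)) :=
  finSumFinEquiv.symm.trans ((Equiv.sumCongr σ π).trans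
    ((Equiv.sumComm (Fin l) (Fin m)).trans
      (finSumFinEquiv.trans (finCongr (Nat.add_comm m l)))))

noncomputable def p123 : Equiv.Perm (Fin 3) := Equiv.ofBijective ![0,1,2] (by decide)
noncomputable def p132 : Equiv.Perm (Fin 3) := Equiv.ofBijective ![0,2,1] (by decide)
noncomputable def p213 : Equiv.Perm (Fin 3) := Equiv.ofBijective ![1,0,2] (by decide)
noncomputable def p231 : Equiv.Perm (Fin 3) := Equiv.ofBijective ![1,2,0] (by decide)
noncomputable def p312 : Equiv.Perm (Fin 3) := Equiv.ofBijective ![2,0,1] (by decide)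
noncomputable def p321 : Equiv.Perm (Fin 3) := Equiv.ofBijective ![2,1,0] (by decide)

noncomputable def p1234 : Equiv.Perm (Fin 4) := Equiv.ofBijective ![0,1,2,3] (by decide)
noncomputable def p3214 : Equiv.Perm (Fin 4) := Equiv.ofBijective ![2,1,0,3] (by decide)
noncomputable def p1243 : Equiv.Perm (Fin 4) := Equiv.ofBijective ![0,1,3,2] (by decide)
noncomputable def p2143 : Equiv.Perm (Fin 4) := Equiv.ofBijective ![1,0,3,2] (by decide)
noncomputable def p1423 : Equiv.Perm (Fin 4) := Equiv.ofBijective ![0,3,1,2] (by decide)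
noncomputable def p1432 : Equiv.Perm (Fin 4) := Equiv.ofBijective ![0,3,2,1] (by decide)
noncomputable def p1324 : Equiv.Perm (Fin 4) := Equiv.ofBijective ![0,2,1,3] (by decide)
noncomputable def p3412 : Equiv.Perm (Fin 4) := Equiv.ofBijective ![2,3,0,1] (by decide)
noncomputable def p3142 : Equiv.Perm (Fin 4) := Equiv.ofBijective ![2,0,3,1] (by decide)
noncomputable def p2413 : Equiv.Perm (Fin 4) := Equiv.ofBijective ![1,3,0,2] (by decide)


lemma swap_val {n : ℕ} {a b : Fin n} (ha : a.val = 0) (hb : b.val = 1) (z : Fin n) :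
    (Equiv.swap a b z).val = if z.val = 0 then 1 else if z.val = 1 then 0 else z.val := by
  by_cases h1 : z = a
  · subst h1; rw [Equiv.swap_apply_left, if_pos ha, hb]
  · by_cases h2 : z = b
    · subst h2; rw [Equiv.swap_apply_right, if_neg (by rw [hb]; omega), if_pos hb, ha]
    · have hz0 : z.val ≠ 0 := fun e => h1 (Fin.ext (e.trans ha.symm))
      have hz1 : z.val ≠ 1 := fun e => h2 (Fin.ext (e.trans hb.symm))
      rw [Equiv.swap_apply_of_ne_of_ne h1 h2, if_neg hz0, if_neg hz1]

lemma swap01_lt_iff {n : ℕ} {a b x y : Fin n} (ha : a.val = 0) (hb : b.val = 1)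
    (h1 : ¬(x = a ∧ y = b)) (h2 : ¬(x = b ∧ y = a)) :
    Equiv.swap a b x < Equiv.swap a b y ↔ x < y := by
  have h1' : ¬(x.val = 0 ∧ y.val = 1) := fun ⟨e1, e2⟩ =>
    h1 ⟨Fin.ext (e1.trans ha.symm), Fin.ext (e2.trans hb.symm)⟩
  have h2' : ¬(x.val = 1 ∧ y.val = 0) := fun ⟨e1, e2⟩ =>
    h2 ⟨Fin.ext (e1.trans hb.symm), Fin.ext (e2.trans ha.symm)⟩
  rw [Fin.lt_def, Fin.lt_def, swap_val ha hb, swap_val ha hb]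
  split_ifs <;> omega

lemma swap01_lt {n : ℕ} {a b x y : Fin n} (ha : a.val = 0) (hb : b.val = 1)
    (h : Equiv.swap a b x < Equiv.swap a b y) : x < y ∨ (x = b ∧ y = a) := by
  rw [Fin.lt_def, swap_val ha hb, swap_val ha hb] at h
  have hor : x.val < y.val ∨ (x.val = 1 ∧ y.val = 0) := by split_ifs at h <;> omega
  rcases hor with h' | ⟨e1, e2⟩
  · exact Or.inl h'
  · exact Or.inr ⟨Fin.ext (e1.trans hb.symm), Fin.ext (e2.trans ha.symm)⟩

def MidMax {n : ℕ} (π : Equiv.Perm (Fin n)) : Prop :=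
  ∃ i j k : Fin n, i < j ∧ j < k ∧ π i < π j ∧ π k < π j

lemma midMax_of_contains {n : ℕ} {π : Equiv.Perm (Fin n)}
    (h : Contains π p132 ∨ Contains π p231) : MidMax π := by
  rcases h with ⟨f, hf, hp⟩ | ⟨f, hf, hp⟩
  · exact ⟨f 0, f 1, f 2, hf (by decide), hf (by decide),
      (hp 0 1).mp (by decide), (hp 2 1).mp (by decide)⟩
  · exact ⟨f 0, f 1, f 2, hf (by decide), hf (by decide),
      (hp 0 1).mp (by decide), (hp 2 1).mp (by decide)⟩

lemma contains_of_midMax {n : ℕ} {π : Equiv.Perm (Fin n)}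
    (h : MidMax π) : Contains π p132 ∨ Contains π p231 := by
  obtain ⟨i, j, k, hij, hjk, h1, h2⟩ := h
  have hik : i ≠ k := ne_of_lt (hij.trans hjk)
  have hne : π i ≠ π k := fun e => hik (π.injective e)
  have hmono : StrictMono (![i,j,k] : Fin 3 → Fin n) := by
    intro s t hst
    fin_cases s <;> fin_cases t <;>
      simp_all [Matrix.cons_val_zero, Matrix.cons_val_one] <;>
      first
        | exact hij | exact hjk | exact hij.trans hjk
        | exact absurd hst (by decide)
  rcases lt_or_gt_of_ne hne with hik' | hik'
  · left
    refine ⟨![i,j,k], hmono, fun s t => ?_⟩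
    fin_cases s <;> fin_cases t <;>
      simp only [Matrix.cons_val_zero, Matrix.cons_val_one, Matrix.head_cons,
        Matrix.cons_val_two, Matrix.tail_cons]
    · exact iff_of_false (by decide) (lt_irrefl _)
    · exact iff_of_true (by decide) h1
    · exact iff_of_true (by decide) hik'
    · exact iff_of_false (by decide) (lt_asymm h1)
    · exact iff_of_false (by decide) (lt_irrefl _)
    · exact iff_of_false (by decide) (lt_asymm h2)
    · exact iff_of_false (by decide) (lt_asymm hik')
    · exact iff_of_true (by decide) h2
    · exact iff_of_false (by decide) (lt_irrefl _)
  · right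
    refine ⟨![i,j,k], hmono, fun s t => ?_⟩
    fin_cases s <;> fin_cases t <;>
      simp only [Matrix.cons_val_zero, Matrix.cons_val_one, Matrix.head_cons,
        Matrix.cons_val_two, Matrix.tail_cons]
    · exact iff_of_false (by decide) (lt_irrefl _)
    · exact iff_of_true (by decide) h1
    · exact iff_of_false (by decide) (lt_asymm hik')
    · exact iff_of_false (by decide) (lt_asymm h1)
    · exact iff_of_false (by decide) (lt_irrefl _)
    · exact iff_of_false (by decide) (lt_asymm h2)
    · exact iff_of_true (by decide) hik'
    · exact iff_of_true (by decide) h2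
    · exact iff_of_false (by decide) (lt_irrefl _)

lemma mem_avoid_iff {n : ℕ} {π : Equiv.Perm (Fin n)} :
    π ∈ avoidSet n {p132, p231} ↔ ¬ MidMax π := by
  constructor
  · intro h hm
    rcases contains_of_midMax hm with hc | hc
    · exact h p132 (Or.inl rfl) hc
    · exact h p231 (Or.inr rfl) hc
  · rintro h σ (rfl | rfl) hc
    · exact h (midMax_of_contains (Or.inl hc))
    · exact h (midMax_of_contains (Or.inr hc))

lemma midMax_swap {n : ℕ} {a b : Fin n} (ha : a.val = 0) (hb : b.val = 1)
    {π : Equiv.Perm (Fin n)} (h : MidMax (Equiv.swap a b * π)) : MidMax π := by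
  obtain ⟨i, j, k, hij, hjk, h1, h2⟩ := h
  simp only [Equiv.Perm.mul_apply] at h1 h2
  have hik : i ≠ k := ne_of_lt (hij.trans hjk)
  refine ⟨i, j, k, hij, hjk, ?_, ?_⟩
  · rcases swap01_lt ha hb h1 with h' | ⟨hxi, hxj⟩
    · exact h'
    · -- π i = b, π j = a
      exfalso
      rcases swap01_lt ha hb h2 with h' | ⟨hxk, _⟩
      · -- π k < π j = a impossible since a.val = 0
        rw [hxj] at h'
        exact absurd h' (by simp [Fin.lt_def, ha])
      · exact hik (π.injective (hxi.trans hxk.symm))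
  · rcases swap01_lt ha hb h2 with h' | ⟨hxk, hxj⟩
    · exact h'
    · exfalso
      rcases swap01_lt ha hb h1 with h' | ⟨hxi, _⟩
      · rw [hxj] at h'
        exact absurd h' (by simp [Fin.lt_def, ha])
      · exact hik (π.injective (hxi.trans hxk.symm))


lemma invCount_swap_parity {n : ℕ} {a b : Fin n} (ha : a.val = 0) (hb : b.val = 1)
    (π : Equiv.Perm (Fin n)) :
    Even (invCount (Equiv.swap a b * π)) ↔ ¬ Even (invCount π) := by
  classical
  set A := Finset.univ.filter (fun p : Fin n × Fin n => p.1 < p.2 ∧ π p.2 < π p.1) with hA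
  set B := Finset.univ.filter
    (fun p : Fin n × Fin n => p.1 < p.2 ∧ (Equiv.swap a b * π) p.2 < (Equiv.swap a b * π) p.1)
    with hB
  have hab : a ≠ b := fun e => by simp [Fin.ext_iff, ha, hb] at e
  set i0 : Fin n := π⁻¹ a with hi0
  set j0 : Fin n := π⁻¹ b with hj0
  have hpi0 : π i0 = a := by rw [hi0]; exact π.apply_symm_apply a
  have hpj0 : π j0 = b := by rw [hj0]; exact π.apply_symm_apply b
  have hij0 : i0 ≠ j0 := fun e => hab (by rw [← hpi0, ← hpj0, e])
  set q : Fin n × Fin n := if i0 < j0 then (i0, j0) else (j0, i0) with hq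
  have hq1 : q.1 < q.2 := by
    rw [hq]; split_ifs with h
    · exact h
    · exact lt_of_le_of_ne (not_lt.mp h) (Ne.symm hij0)
  have key : ∀ x : Fin n, π x = a → x = i0 := by
    intro x hx
    have := congrArg π.symm hx
    simpa [hi0] using this
  have key' : ∀ x : Fin n, π x = b → x = j0 := by
    intro x hx
    have := congrArg π.symm hx
    simpa [hj0] using this
  have claim1 : ∀ p : Fin n × Fin n, p ≠ q → (p ∈ B ↔ p ∈ A) := by
    intro p hpq
    simp only [hA, hB, Finset.mem_filter, Finset.mem_univ, true_and]
    simp only [Equiv.Perm.mul_apply]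
    by_cases hp : p.1 < p.2
    · simp only [hp, true_and]
      refine swap01_lt_iff ha hb ?_ ?_
      · rintro ⟨e1, e2⟩
        have hp2 : p.2 = i0 := key _ e1
        have hp1 : p.1 = j0 := key' _ e2
        apply hpq
        have : ¬ (i0 < j0) := by rw [← hp1, ← hp2]; exact lt_asymm hp
        rw [hq, if_neg this, ← hp1, ← hp2]
      · rintro ⟨e1, e2⟩
        have hp2 : p.2 = j0 := key' _ e1
        have hp1 : p.1 = i0 := key _ e2
        apply hpq
        have : i0 < j0 := by rw [← hp1, ← hp2]; exact hp
        rw [hq, if_pos this, ← hp1, ← hp2]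
    · simp [hp]
  have hab' : a < b := by simp [Fin.lt_def, ha, hb]
  have claim2 : q ∈ A ↔ q ∉ B := by
    simp only [hA, hB, Finset.mem_filter, Finset.mem_univ, true_and]
    simp only [Equiv.Perm.mul_apply,
      hq1, true_and]
    rw [hq]
    split_ifs with h
    · simp only [hpi0, hpj0]
      rw [Equiv.swap_apply_left, Equiv.swap_apply_right]
      simp [lt_asymm hab', hab']
    · simp only [hpi0, hpj0]
      rw [Equiv.swap_apply_left, Equiv.swap_apply_right]
      simp [lt_asymm hab', hab']
  have herase : B.erase q = A.erase q := by
    ext p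
    simp only [Finset.mem_erase]
    constructor
    · rintro ⟨h1, h2⟩; exact ⟨h1, (claim1 p h1).mp h2⟩
    · rintro ⟨h1, h2⟩; exact ⟨h1, (claim1 p h1).mpr h2⟩
  have : invCount (Equiv.swap a b * π) = B.card := by rw [invCount, hB]
  rw [invCount, invCount, ← hA, ← hB]
  by_cases hqA : q ∈ A
  · have hqB : q ∉ B := claim2.mp hqA
    have h1 : A.card = (A.erase q).card + 1 := (Finset.card_erase_add_one hqA).symm
    have h2 : B.card = (A.erase q).card := by
      rw [← herase, Finset.erase_eq_of_notMem hqB]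
    rw [h1, h2, Nat.even_add_one, not_not]
  · have hqB : q ∈ B := by by_contra h; exact hqA (claim2.mpr h)
    have h1 : B.card = (A.erase q).card + 1 := by
      rw [← herase]; exact (Finset.card_erase_add_one hqB).symm
    have h2 : A.card = (A.erase q).card := by rw [Finset.erase_eq_of_notMem hqA]
    rw [h1, h2, Nat.even_add_one]


/-- `S_n(132, 231)` is sign-balanced for every `n > 1`. -/
theorem stmt_9 (n : ℕ) (hn : 2 ≤ n) :
    SignBalanced (avoidSet n {p132, p231}) := by
  classical
  set a : Fin n := ⟨0, by omega⟩ with haa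
  set b : Fin n := ⟨1, by omega⟩ with hbb
  have ha : a.val = 0 := rfl
  have hb : b.val = 1 := rfl
  set s : Equiv.Perm (Fin n) := Equiv.swap a b with hs
  have hinv : ∀ π : Equiv.Perm (Fin n), s * (s * π) = π := by
    intro π
    rw [hs, ← mul_assoc, Equiv.swap_mul_self, one_mul]
  have hmem : ∀ π, π ∈ avoidSet n {p132, p231} → s * π ∈ avoidSet n {p132, p231} := by
    intro π hπ
    rw [mem_avoid_iff] at hπ ⊢
    exact fun hm => hπ (midMax_swap ha hb hm)
  rw [SignBalanced]
  have himage : (fun π => s * π) '' {π ∈ avoidSet n {p132, p231} | Even (invCount π)}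
      = {π ∈ avoidSet n {p132, p231} | ¬ Even (invCount π)} := by
    ext τ
    simp only [Set.mem_image, Set.mem_setOf_eq]
    constructor
    · rintro ⟨π, ⟨hmem', heven⟩, rfl⟩
      exact ⟨hmem _ hmem', fun h => (invCount_swap_parity ha hb π).mp h heven⟩
    · rintro ⟨hτ, hodd⟩
      refine ⟨s * τ, ⟨hmem _ hτ, ?_⟩, hinv τ⟩
      rw [hs, invCount_swap_parity ha hb]; exact hodd
  rw [← himage, Set.ncard_image_of_injective _ (mul_right_injective s)]
end

section
/- For every integer n > 1, the set S_n(123, 213) of permutations of {1,...,n} avoiding both patterns 123 and 213 is sign-balanced. -/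
section Aux

variable {n : ℕ}

/-- Witness characterization: containing 123 or 213 is the same as having
`i < j < k` with `π i < π k` and `π j < π k`. -/
lemma contains_iff_witness (π : Equiv.Perm (Fin n)) :
    (Contains π p123 ∨ Contains π p213) ↔
      ∃ i j k : Fin n, i < j ∧ j < k ∧ π i < π k ∧ π j < π k := by
  constructor
  · rintro (⟨f, hf, hiff⟩ | ⟨f, hf, hiff⟩)
    · exact ⟨f 0, f 1, f 2, hf (by decide), hf (by decide),
        (hiff 0 2).mp (by decide), (hiff 1 2).mp (by decide)⟩
    · exact ⟨f 0, f 1, f 2, hf (by decide), hf (by decide),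
        (hiff 0 2).mp (by decide), (hiff 1 2).mp (by decide)⟩
  · rintro ⟨i, j, k, hij, hjk, hik', hjk'⟩
    have hmono : StrictMono ![i, j, k] := by
      intro s t hst
      fin_cases s <;> fin_cases t <;>
        simp_all [Matrix.cons_val_zero, Matrix.cons_val_one] <;>
        first
          | exact hij | exact hjk | exact hij.trans hjk
          | exact absurd hst (by decide)
    rcases lt_or_gt_of_ne (fun h : π i = π j => (hij.ne (π.injective h))) with h | h
    · left
      refine ⟨![i, j, k], hmono, ?_⟩
      intro s t
      fin_cases s <;> fin_cases t <;>
        simp [p123, Equiv.ofBijective_apply, lt_irrefl, h, hik', hjk',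
          h.not_gt, hik'.not_gt, hjk'.not_gt]
    · right
      refine ⟨![i, j, k], hmono, ?_⟩
      intro s t
      fin_cases s <;> fin_cases t <;>
        simp [p213, Equiv.ofBijective_apply, lt_irrefl, h, hik', hjk',
          h.not_gt, hik'.not_gt, hjk'.not_gt]

lemma mem_avoid_iff_s10 (π : Equiv.Perm (Fin n)) :
    π ∈ avoidSet n {p123, p213} ↔
      ¬ ∃ i j k : Fin n, i < j ∧ j < k ∧ π i < π k ∧ π j < π k := by
  rw [← contains_iff_witness]
  constructor
  · rintro h (hc | hc)
    · exact h p123 (by simp) hc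
    · exact h p213 (by simp) hc
  · rintro h σ hσ hc
    rcases hσ with rfl | rfl
    · exact h (Or.inl hc)
    · exact h (Or.inr hc)

/-- the swap of positions 0 and 1 -/
def sw (hn : 2 ≤ n) : Equiv.Perm (Fin n) :=
  Equiv.swap ⟨0, by omega⟩ ⟨1, by omega⟩

lemma sw_val (hn : 2 ≤ n) (i : Fin n) :
    ((sw hn) i).val = if i.val = 0 then 1 else if i.val = 1 then 0 else i.val := by
  rcases eq_or_ne i ⟨0, by omega⟩ with h | h0
  · rw [h]; simp [sw, Equiv.swap_apply_left]
  rcases eq_or_ne i ⟨1, by omega⟩ with h | h1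
  · rw [h]; simp [sw, Equiv.swap_apply_right]
  · rw [sw, Equiv.swap_apply_of_ne_of_ne h0 h1]
    rw [Fin.ne_iff_vne] at h0 h1
    simp only [Fin.val_mk] at h0 h1 ⊢
    rw [if_neg h0, if_neg h1]

lemma sw_lt (hn : 2 ≤ n) {k : Fin n} (hk : 2 ≤ k.val) (i : Fin n) (hik : i < k) :
    sw hn i < k := by
  rw [Fin.lt_def] at hik ⊢
  rw [sw_val hn i]
  split_ifs <;> omega

lemma sw_fix (hn : 2 ≤ n) {k : Fin n} (hk : 2 ≤ k.val) : sw hn k = k := by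
  apply Fin.ext
  rw [sw_val hn k]
  split_ifs <;> omega

lemma avoid_mul_sw (hn : 2 ≤ n) {π : Equiv.Perm (Fin n)}
    (hπ : π ∈ avoidSet n {p123, p213}) :
    π * sw hn ∈ avoidSet n {p123, p213} := by
  rw [mem_avoid_iff_s10] at hπ ⊢
  rintro ⟨i, j, k, hij, hjk, h1, h2⟩
  have hk2 : 2 ≤ k.val := by
    have := hij; have := hjk
    simp only [Fin.lt_def] at this ⊢
    omega
  simp only [Equiv.Perm.mul_apply] at h1 h2
  rw [sw_fix hn hk2] at h1 h2
  have hi' : sw hn i < k := sw_lt hn hk2 i (hij.trans hjk)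
  have hj' : sw hn j < k := sw_lt hn hk2 j hjk
  have hne : sw hn i ≠ sw hn j := fun h => hij.ne ((sw hn).injective h)
  rcases lt_or_gt_of_ne hne with h | h
  · exact hπ ⟨sw hn i, sw hn j, k, h, hj', h1, h2⟩
  · exact hπ ⟨sw hn j, sw hn i, k, h, hi', h2, h1⟩

lemma sw_pair_lt (hn : 2 ≤ n) {p : Fin n × Fin n}
    (hlt : p.1 < p.2) (hne : p ≠ (⟨0, by omega⟩, ⟨1, by omega⟩)) :
    sw hn p.1 < sw hn p.2 := by
  have hv : ¬ (p.1.val = 0 ∧ p.2.val = 1) := by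
    rintro ⟨h1, h2⟩
    exact hne (Prod.ext (Fin.ext h1) (Fin.ext h2))
  rw [Fin.lt_def] at hlt ⊢
  rw [sw_val hn p.1, sw_val hn p.2]
  split_ifs <;> omega

lemma sw_sw (hn : 2 ≤ n) (i : Fin n) : sw hn (sw hn i) = i := Equiv.swap_apply_self _ _ _

/-- multiplying by the adjacent swap changes the inversion count parity -/
lemma invCount_mul_sw (hn : 2 ≤ n) (π : Equiv.Perm (Fin n)) :
    Odd (invCount (π * sw hn) + invCount π) := by
  classical
  set a : Fin n := ⟨0, by omega⟩
  set b : Fin n := ⟨1, by omega⟩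
  set q : Fin n × Fin n := (a, b)
  set S1 := Finset.univ.filter
    (fun p : Fin n × Fin n => p.1 < p.2 ∧ (π * sw hn) p.2 < (π * sw hn) p.1)
  set S2 := Finset.univ.filter
    (fun p : Fin n × Fin n => p.1 < p.2 ∧ π p.2 < π p.1)
  have hswab : sw hn a = b := Equiv.swap_apply_left _ _
  have hswba : sw hn b = a := Equiv.swap_apply_right _ _
  have hmem1 : ∀ p : Fin n × Fin n,
      p ∈ S1 ↔ p.1 < p.2 ∧ π (sw hn p.2) < π (sw hn p.1) := by
    intro p; simp only [S1, Finset.mem_filter, Finset.mem_univ, true_and]; exact Iff.rfl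
  have hmem2 : ∀ p : Fin n × Fin n, p ∈ S2 ↔ p.1 < p.2 ∧ π p.2 < π p.1 := by
    intro p; simp [S2]
  -- cards of erased sets are equal
  have hcard : (S1.erase q).card = (S2.erase q).card := by
    apply Finset.card_bij' (fun p _ => (sw hn p.1, sw hn p.2))
      (fun p _ => (sw hn p.1, sw hn p.2))
    · intro p hp
      rw [Finset.mem_erase, hmem1] at hp
      obtain ⟨hpq, hlt, hv⟩ := hp
      rw [Finset.mem_erase, hmem2]
      refine ⟨?_, sw_pair_lt hn hlt hpq, by simpa using hv⟩
      intro h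
      have h1 : sw hn p.1 = a := congrArg Prod.fst h
      have h2 : sw hn p.2 = b := congrArg Prod.snd h
      have : p.1 = b := by
        have := congrArg (sw hn) h1; rwa [sw_sw, hswab] at this
      have : p.2 = a := by
        have := congrArg (sw hn) h2; rw [sw_sw, hswba] at this
        rw [this] at hlt
        rw [‹p.1 = b›] at hlt
        exact absurd hlt (by simp [a, b, Fin.lt_def])
      rw [‹p.1 = b›, this] at hlt
      exact absurd hlt (by simp [a, b, Fin.lt_def])
    · intro p hp
      rw [Finset.mem_erase, hmem2] at hp
      obtain ⟨hpq, hlt, hv⟩ := hp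
      rw [Finset.mem_erase, hmem1]
      refine ⟨?_, sw_pair_lt hn hlt hpq, by simpa [sw_sw] using hv⟩
      intro h
      have h1 : sw hn p.1 = a := congrArg Prod.fst h
      have h2 : sw hn p.2 = b := congrArg Prod.snd h
      have e1 : p.1 = b := by
        have := congrArg (sw hn) h1; rwa [sw_sw, hswab] at this
      have e2 : p.2 = a := by
        have := congrArg (sw hn) h2; rwa [sw_sw, hswba] at this
      rw [e1, e2] at hlt
      exact absurd hlt (by simp [a, b, Fin.lt_def])
    · intro p _; simp [sw_sw]
    · intro p _; simp [sw_sw]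
  have hab : a < b := by simp [a, b, Fin.lt_def]
  have hπab : π a ≠ π b := fun h => hab.ne (π.injective h)
  have hq1 : q ∈ S1 ↔ π a < π b := by
    rw [hmem1]; simp [q, hswab, hswba, hab]
  have hq2 : q ∈ S2 ↔ π b < π a := by
    rw [hmem2]; simp [q, hab]
  have hcard1 : S1.card = (S1.erase q).card + (if q ∈ S1 then 1 else 0) := by
    split_ifs with h
    · rw [Finset.card_erase_of_mem h]
      have : 1 ≤ S1.card := Finset.card_pos.mpr ⟨q, h⟩
      omega
    · rw [Finset.erase_eq_of_notMem h]; omega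
  have hcard2 : S2.card = (S2.erase q).card + (if q ∈ S2 then 1 else 0) := by
    split_ifs with h
    · rw [Finset.card_erase_of_mem h]
      have : 1 ≤ S2.card := Finset.card_pos.mpr ⟨q, h⟩
      omega
    · rw [Finset.erase_eq_of_notMem h]; omega
  have hflip : (if q ∈ S1 then 1 else 0) + (if q ∈ S2 then 1 else 0) = 1 := by
    rcases lt_or_gt_of_ne hπab with h | h
    · rw [if_pos (hq1.mpr h), if_neg (fun hc => absurd (hq2.mp hc) h.not_gt)]
    · rw [if_neg (fun hc => absurd (hq1.mp hc) h.not_gt), if_pos (hq2.mpr h)]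
  have e1 : invCount (π * sw hn) = S1.card := rfl
  have e2 : invCount π = S2.card := rfl
  rw [e1, e2, hcard1, hcard2, hcard]
  refine ⟨(S2.erase q).card, by omega⟩

end Aux

/-- `S_n(123, 213)` is sign-balanced for every `n > 1`. -/
theorem stmt_10 (n : ℕ) (hn : 2 ≤ n) :
    SignBalanced (avoidSet n {p123, p213}) := by
  classical
  set s := sw hn with hs
  set S := avoidSet n {p123, p213} with hS
  have himg : (fun π : Equiv.Perm (Fin n) => π * s) ''
      {π ∈ S | Even (invCount π)} = {π ∈ S | ¬ Even (invCount π)} := by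
    ext π
    constructor
    · rintro ⟨σ, ⟨hσS, hσE⟩, rfl⟩
      refine ⟨avoid_mul_sw hn hσS, ?_⟩
      have hodd := invCount_mul_sw hn σ
      rw [Nat.odd_add] at hodd
      intro h
      exact (Nat.not_even_iff_odd.mpr (hodd.mpr hσE)) h
    · rintro ⟨hπS, hπE⟩
      refine ⟨π * s, ⟨avoid_mul_sw hn hπS, ?_⟩, ?_⟩
      · have hodd := invCount_mul_sw hn π
        rw [Nat.odd_add] at hodd
        by_contra h
        exact hπE (hodd.mp (Nat.not_even_iff_odd.mp h))
      · have h1 : s * s = 1 := Equiv.swap_mul_self _ _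
        show π * s * s = π
        rw [mul_assoc, h1, mul_one]
  unfold SignBalanced
  rw [← himg]
  rw [Set.ncard_image_of_injective _ (fun x y h => by
    simpa using congrArg (· * s⁻¹) h)]
end

section
/- Let σ_1,...,σ_r be patterns in S_3. Then S_n(σ_1,...,σ_r) is sign-balanced for every integer n > 1 if and only if the set {σ_1,...,σ_r} is itself sign-balanced and {σ_1,...,σ_r} ≠ {132, 213, 231, 312}. -/
-- ============ my development ============
section SB14

instance decContains {n k : ℕ} (π : Equiv.Perm (Fin n)) (σ : Equiv.Perm (Fin k)) :
    Decidable (Contains π σ) := by unfold Contains; infer_instance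

def q123 : Equiv.Perm (Fin 3) := ⟨![0,1,2], ![0,1,2], by decide, by decide⟩
def q132 : Equiv.Perm (Fin 3) := ⟨![0,2,1], ![0,2,1], by decide, by decide⟩
def q213 : Equiv.Perm (Fin 3) := ⟨![1,0,2], ![1,0,2], by decide, by decide⟩
def q231 : Equiv.Perm (Fin 3) := ⟨![1,2,0], ![2,0,1], by decide, by decide⟩
def q312 : Equiv.Perm (Fin 3) := ⟨![2,0,1], ![1,2,0], by decide, by decide⟩
def q321 : Equiv.Perm (Fin 3) := ⟨![2,1,0], ![2,1,0], by decide, by decide⟩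

lemma pq123 : p123 = q123 := by ext x; fin_cases x <;> rfl
lemma pq132 : p132 = q132 := by ext x; fin_cases x <;> rfl
lemma pq213 : p213 = q213 := by ext x; fin_cases x <;> rfl
lemma pq231 : p231 = q231 := by ext x; fin_cases x <;> rfl
lemma pq312 : p312 = q312 := by ext x; fin_cases x <;> rfl
lemma pq321 : p321 = q321 := by ext x; fin_cases x <;> rfl

lemma third : ∀ s t : Fin 3, s ≠ t → ∃ u : Fin 3, u ≠ s ∧ u ≠ t := by decide
lemma cover : ∀ s t u v : Fin 3, s ≠ t → u ≠ s → u ≠ t → (v = s ∨ v = t ∨ v = u) := by decide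
lemma chain3 : ∀ a b c : Fin 3, a < b → b < c → a = 0 ∧ b = 1 ∧ c = 2 := by decide

lemma mono3 {α : Type*} [Preorder α] {g : Fin 3 → α} (h1 : g 0 < g 1) (h2 : g 1 < g 2) :
    StrictMono g := by
  intro s u hsu
  fin_cases s <;> fin_cases u <;>
    first
      | exact absurd hsu (by decide)
      | exact h1
      | exact h2
      | exact h1.trans h2

/-- signAux as a power of -1 counted by inversions. -/
lemma signAux_eq_pow {n : ℕ} (π : Equiv.Perm (Fin n)) :
    Equiv.Perm.signAux π = (-1 : ℤˣ) ^ invCount π := by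
  unfold Equiv.Perm.signAux invCount
  rw [Finset.prod_ite, Finset.prod_const, Finset.prod_const, one_pow, mul_one]
  congr 1
  apply Finset.card_bij (fun (a : Σ _ : Fin n, Fin n) (_ : a ∈ _) => ((a.2, a.1) : Fin n × Fin n))
  · rintro ⟨a1, a2⟩ ha
    rw [Finset.mem_filter] at ha
    obtain ⟨h1, h2⟩ := ha
    rw [Equiv.Perm.mem_finPairsLT] at h1
    simp only [Finset.mem_filter, Finset.mem_univ, true_and]
    refine ⟨h1, lt_of_le_of_ne h2 (fun he => ?_)⟩
    exact absurd (π.injective he).symm (by intro hc; rw [hc] at h1; exact lt_irrefl _ h1)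
  · rintro ⟨a1, a2⟩ _ ⟨b1, b2⟩ _ h
    simp only [Prod.mk.injEq] at h
    obtain ⟨h1, h2⟩ := h
    subst h1; subst h2; rfl
  · rintro ⟨b1, b2⟩ hb
    rw [Finset.mem_filter] at hb
    obtain ⟨-, hb1, hb2⟩ := hb
    exact ⟨⟨b2, b1⟩, by rw [Finset.mem_filter, Equiv.Perm.mem_finPairsLT]; exact ⟨hb1, le_of_lt hb2⟩, rfl⟩

lemma even_invCount_iff_signAux {n : ℕ} (π : Equiv.Perm (Fin n)) :
    Even (invCount π) ↔ Equiv.Perm.signAux π = 1 := by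
  rw [signAux_eq_pow]
  constructor
  · exact fun h => h.neg_one_pow
  · intro h
    by_contra hodd
    rw [Nat.not_even_iff_odd] at hodd
    rw [hodd.neg_one_pow] at h
    exact absurd h (by decide)

lemma parity_flip_left {n : ℕ} (a b : Fin n) (hab : a ≠ b) (π : Equiv.Perm (Fin n)) :
    Even (invCount (Equiv.swap a b * π)) ↔ ¬ Even (invCount π) := by
  rw [even_invCount_iff_signAux, even_invCount_iff_signAux, Equiv.Perm.signAux_mul,
    Equiv.Perm.signAux_swap hab]
  rcases Int.units_eq_one_or (Equiv.Perm.signAux π) with h | h <;> rw [h] <;> decide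

lemma parity_flip_right {n : ℕ} (a b : Fin n) (hab : a ≠ b) (π : Equiv.Perm (Fin n)) :
    Even (invCount (π * Equiv.swap a b)) ↔ ¬ Even (invCount π) := by
  rw [even_invCount_iff_signAux, even_invCount_iff_signAux, Equiv.Perm.signAux_mul,
    Equiv.Perm.signAux_swap hab]
  rcases Int.units_eq_one_or (Equiv.Perm.signAux π) with h | h <;> rw [h] <;> decide

lemma signBalanced_of_invol {n : ℕ} (S : Set (Equiv.Perm (Fin n)))
    (g : Equiv.Perm (Fin n) → Equiv.Perm (Fin n))
    (hgg : ∀ π, g (g π) = π) (hmem : ∀ π ∈ S, g π ∈ S)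
    (hpar : ∀ π, Even (invCount (g π)) ↔ ¬ Even (invCount π)) : SignBalanced S := by
  have hinj : Function.Injective g := Function.LeftInverse.injective hgg
  have himg : {π ∈ S | ¬ Even (invCount π)} = g '' {π ∈ S | Even (invCount π)} := by
    ext ρ
    simp only [Set.mem_setOf_eq, Set.mem_image]
    constructor
    · rintro ⟨hS, hodd⟩
      exact ⟨g ρ, ⟨hmem ρ hS, (hpar ρ).mpr hodd⟩, hgg ρ⟩
    · rintro ⟨ρ0, ⟨hS, heven⟩, rfl⟩
      exact ⟨hmem ρ0 hS, fun hcon => ((hpar ρ0).mp hcon) heven⟩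
  unfold SignBalanced
  rw [himg, Set.ncard_image_of_injective _ hinj]

lemma signBalanced_iff_filter {n : ℕ} (P : Equiv.Perm (Fin n) → Prop) [DecidablePred P] :
    SignBalanced {π | P π} ↔
      (Finset.univ.filter (fun π => P π ∧ Even (invCount π))).card =
        (Finset.univ.filter (fun π => P π ∧ ¬ Even (invCount π))).card := by
  have e1 : {π ∈ {π | P π} | Even (invCount π)} =
      ↑(Finset.univ.filter (fun π => P π ∧ Even (invCount π))) := by
    ext ρ; simp [Set.mem_setOf_eq]
  have e2 : {π ∈ {π | P π} | ¬ Even (invCount π)} =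
      ↑(Finset.univ.filter (fun π => P π ∧ ¬ Even (invCount π))) := by
    ext ρ; simp [Set.mem_setOf_eq]
  rw [SignBalanced, e1, e2, Set.ncard_coe_finset, Set.ncard_coe_finset]

lemma pat_of_ranks {m : ℕ} (τ : Equiv.Perm (Fin 3)) (w : Fin 3 → Fin m) (a0 a1 a2 : Fin 3)
    (h01 : a0 ≠ a1) (h02 : a0 ≠ a2) (h12 : a1 ≠ a2)
    (e0 : τ a0 = 0) (e1 : τ a1 = 1) (e2 : τ a2 = 2)
    (o01 : w a0 < w a1) (o12 : w a1 < w a2) :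
    ∀ s u : Fin 3, τ s < τ u ↔ w s < w u := by
  have o02 := o01.trans o12
  intro s u
  rcases cover a0 a1 a2 s h01 h02.symm h12.symm with h | h | h <;>
    rcases cover a0 a1 a2 u h01 h02.symm h12.symm with h' | h' | h' <;>
    rw [h, h'] <;> simp only [e0, e1, e2] <;>
    first
      | exact iff_of_false (by decide) (lt_irrefl _)
      | exact iff_of_true (by decide) o01
      | exact iff_of_true (by decide) o12
      | exact iff_of_true (by decide) o02
      | exact iff_of_false (by decide) o01.asymm
      | exact iff_of_false (by decide) o12.asymm
      | exact iff_of_false (by decide) o02.asymm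

end SB14

section Transfer

open Equiv

variable {n : ℕ}

lemma fin_small_top (hn : 2 ≤ n) (z : Fin n) (h1 : z ≠ (⟨n-2, by omega⟩ : Fin n))
    (h2 : z ≠ (⟨n-1, by omega⟩ : Fin n)) : z < (⟨n-2, by omega⟩ : Fin n) := by
  have hv1 : z.val ≠ n-2 := fun hh => h1 (Fin.ext hh)
  have hv2 : z.val ≠ n-1 := fun hh => h2 (Fin.ext hh)
  have := z.isLt
  rw [Fin.lt_def]
  simp only []
  omega

lemma fin_big_bot (hn : 2 ≤ n) (z : Fin n) (h1 : z ≠ (⟨0, by omega⟩ : Fin n))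
    (h2 : z ≠ (⟨1, by omega⟩ : Fin n)) : (⟨1, by omega⟩ : Fin n) < z := by
  have hv1 : z.val ≠ 0 := fun hh => h1 (Fin.ext hh)
  have hv2 : z.val ≠ 1 := fun hh => h2 (Fin.ext hh)
  rw [Fin.lt_def]
  simp only []
  omega

lemma AB_lt_top (hn : 2 ≤ n) : (⟨n-2, by omega⟩ : Fin n) < (⟨n-1, by omega⟩ : Fin n) := by
  rw [Fin.lt_def]; simp only []; omega

lemma AB_lt_bot (hn : 2 ≤ n) : (⟨0, by omega⟩ : Fin n) < (⟨1, by omega⟩ : Fin n) := by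
  rw [Fin.lt_def]; simp only []; omega

theorem transfer_vtop (hn : 2 ≤ n) (π : Equiv.Perm (Fin n)) (σ : Equiv.Perm (Fin 3))
    (h : Contains (Equiv.swap (⟨n-2, by omega⟩ : Fin n) (⟨n-1, by omega⟩ : Fin n) * π) σ) :
    Contains π σ ∨ Contains π (Equiv.swap (1 : Fin 3) 2 * σ) := by
  set A : Fin n := ⟨n-2, by omega⟩ with hA
  set B : Fin n := ⟨n-1, by omega⟩ with hB
  have hABne : A ≠ B := ne_of_lt (AB_lt_top hn)
  have hABlt : A < B := AB_lt_top hn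
  obtain ⟨f, hf, hpat⟩ := h
  have hpat' : ∀ s u : Fin 3, σ s < σ u ↔
      Equiv.swap A B (π (f s)) < Equiv.swap A B (π (f u)) := by
    intro s u; simpa using hpat s u
  by_cases hExA : ∃ s0, π (f s0) = A
  · by_cases hExB : ∃ t0, π (f t0) = B
    · obtain ⟨s0, hs0⟩ := hExA; obtain ⟨t0, ht0⟩ := hExB
      have hst : s0 ≠ t0 := by rintro rfl; exact hABne (hs0.symm.trans ht0)
      obtain ⟨u0, hu1, hu2⟩ := third s0 t0 hst
      have hwinj : ∀ s u : Fin 3, π (f s) = π (f u) → s = u :=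
        fun s u hh => hf.injective (π.injective hh)
      have hwuA : π (f u0) ≠ A := fun hh => hu1 (hwinj _ _ (hh.trans hs0.symm))
      have hwuB : π (f u0) ≠ B := fun hh => hu2 (hwinj _ _ (hh.trans ht0.symm))
      have husmall : π (f u0) < A := fin_small_top hn _ hwuA hwuB
      have e1 : Equiv.swap A B (π (f s0)) = B := by rw [hs0]; exact Equiv.swap_apply_left A B
      have e2 : Equiv.swap A B (π (f t0)) = A := by rw [ht0]; exact Equiv.swap_apply_right A B
      have e3 : Equiv.swap A B (π (f u0)) = π (f u0) := Equiv.swap_apply_of_ne_of_ne hwuA hwuB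
      have c1 : σ u0 < σ t0 := (hpat' u0 t0).mpr (by rw [e3, e2]; exact husmall)
      have c2 : σ t0 < σ s0 := (hpat' t0 s0).mpr (by rw [e2, e1]; exact hABlt)
      obtain ⟨g1, g2, g3⟩ := chain3 _ _ _ c1 c2
      right
      have o1 : π (f u0) < π (f s0) := by rw [hs0]; exact husmall
      have o2 : π (f s0) < π (f t0) := by rw [hs0, ht0]; exact hABlt
      have es : (Equiv.swap (1:Fin 3) 2 * σ) s0 = 1 := by
        simp [Equiv.Perm.mul_apply, g3]
      have et : (Equiv.swap (1:Fin 3) 2 * σ) t0 = 2 := by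
        simp [Equiv.Perm.mul_apply, g2]
      have eu : (Equiv.swap (1:Fin 3) 2 * σ) u0 = 0 := by
        simp [Equiv.Perm.mul_apply, g1, Equiv.swap_apply_of_ne_of_ne]
      exact ⟨f, hf, pat_of_ranks _ _ u0 s0 t0 hu1 hu2 hst eu es et o1 o2⟩
    · push_neg at hExB
      left
      refine ⟨f, hf, fun s u => (hpat' s u).trans ?_⟩
      rcases eq_or_ne (π (f s)) A with h1 | h1 <;> rcases eq_or_ne (π (f u)) A with h2 | h2
      · rw [h1, h2]; exact iff_of_false (lt_irrefl _) (lt_irrefl _)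
      · rw [h1, Equiv.swap_apply_left, Equiv.swap_apply_of_ne_of_ne h2 (hExB u)]
        have hsm := fin_small_top hn _ h2 (hExB u)
        exact iff_of_false (hsm.trans hABlt).asymm hsm.asymm
      · rw [h2, Equiv.swap_apply_left, Equiv.swap_apply_of_ne_of_ne h1 (hExB s)]
        have hsm := fin_small_top hn _ h1 (hExB s)
        exact iff_of_true (hsm.trans hABlt) hsm
      · rw [Equiv.swap_apply_of_ne_of_ne h1 (hExB s), Equiv.swap_apply_of_ne_of_ne h2 (hExB u)]
  · push_neg at hExA
    left
    refine ⟨f, hf, fun s u => (hpat' s u).trans ?_⟩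
    rcases eq_or_ne (π (f s)) B with h1 | h1 <;> rcases eq_or_ne (π (f u)) B with h2 | h2
    · rw [h1, h2]; exact iff_of_false (lt_irrefl _) (lt_irrefl _)
    · rw [h1, Equiv.swap_apply_right, Equiv.swap_apply_of_ne_of_ne (hExA u) h2]
      have hsm := fin_small_top hn _ (hExA u) h2
      exact iff_of_false hsm.asymm (hsm.trans hABlt).asymm
    · rw [h2, Equiv.swap_apply_right, Equiv.swap_apply_of_ne_of_ne (hExA s) h1]
      have hsm := fin_small_top hn _ (hExA s) h1
      exact iff_of_true hsm (hsm.trans hABlt)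
    · rw [Equiv.swap_apply_of_ne_of_ne (hExA s) h1, Equiv.swap_apply_of_ne_of_ne (hExA u) h2]

theorem transfer_vbot (hn : 2 ≤ n) (π : Equiv.Perm (Fin n)) (σ : Equiv.Perm (Fin 3))
    (h : Contains (Equiv.swap (⟨0, by omega⟩ : Fin n) (⟨1, by omega⟩ : Fin n) * π) σ) :
    Contains π σ ∨ Contains π (Equiv.swap (0 : Fin 3) 1 * σ) := by
  set A : Fin n := ⟨0, by omega⟩ with hA
  set B : Fin n := ⟨1, by omega⟩ with hB
  have hABlt : A < B := AB_lt_bot hn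
  have hABne : A ≠ B := ne_of_lt hABlt
  obtain ⟨f, hf, hpat⟩ := h
  have hpat' : ∀ s u : Fin 3, σ s < σ u ↔
      Equiv.swap A B (π (f s)) < Equiv.swap A B (π (f u)) := by
    intro s u; simpa using hpat s u
  by_cases hExA : ∃ s0, π (f s0) = A
  · by_cases hExB : ∃ t0, π (f t0) = B
    · obtain ⟨s0, hs0⟩ := hExA; obtain ⟨t0, ht0⟩ := hExB
      have hst : s0 ≠ t0 := by rintro rfl; exact hABne (hs0.symm.trans ht0)
      obtain ⟨u0, hu1, hu2⟩ := third s0 t0 hst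
      have hwinj : ∀ s u : Fin 3, π (f s) = π (f u) → s = u :=
        fun s u hh => hf.injective (π.injective hh)
      have hwuA : π (f u0) ≠ A := fun hh => hu1 (hwinj _ _ (hh.trans hs0.symm))
      have hwuB : π (f u0) ≠ B := fun hh => hu2 (hwinj _ _ (hh.trans ht0.symm))
      have hubig : B < π (f u0) := fin_big_bot hn _ hwuA hwuB
      have e1 : Equiv.swap A B (π (f s0)) = B := by rw [hs0]; exact Equiv.swap_apply_left A B
      have e2 : Equiv.swap A B (π (f t0)) = A := by rw [ht0]; exact Equiv.swap_apply_right A B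
      have e3 : Equiv.swap A B (π (f u0)) = π (f u0) := Equiv.swap_apply_of_ne_of_ne hwuA hwuB
      have c1 : σ t0 < σ s0 := (hpat' t0 s0).mpr (by rw [e2, e1]; exact hABlt)
      have c2 : σ s0 < σ u0 := (hpat' s0 u0).mpr (by rw [e1, e3]; exact hubig)
      obtain ⟨g1, g2, g3⟩ := chain3 _ _ _ c1 c2
      right
      have o1 : π (f s0) < π (f t0) := by rw [hs0, ht0]; exact hABlt
      have o2 : π (f t0) < π (f u0) := by rw [ht0]; exact hubig
      have es : (Equiv.swap (0:Fin 3) 1 * σ) s0 = 0 := by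
        simp [Equiv.Perm.mul_apply, g2]
      have et : (Equiv.swap (0:Fin 3) 1 * σ) t0 = 1 := by
        simp [Equiv.Perm.mul_apply, g1]
      have eu : (Equiv.swap (0:Fin 3) 1 * σ) u0 = 2 := by
        simp [Equiv.Perm.mul_apply, g3, Equiv.swap_apply_of_ne_of_ne]
      exact ⟨f, hf, pat_of_ranks _ _ s0 t0 u0 hst hu1.symm hu2.symm es et eu o1 o2⟩
    · push_neg at hExB
      left
      refine ⟨f, hf, fun s u => (hpat' s u).trans ?_⟩
      rcases eq_or_ne (π (f s)) A with h1 | h1 <;> rcases eq_or_ne (π (f u)) A with h2 | h2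
      · rw [h1, h2]; exact iff_of_false (lt_irrefl _) (lt_irrefl _)
      · rw [h1, Equiv.swap_apply_left, Equiv.swap_apply_of_ne_of_ne h2 (hExB u)]
        have hbg := fin_big_bot hn _ h2 (hExB u)
        exact iff_of_true hbg (hABlt.trans hbg)
      · rw [h2, Equiv.swap_apply_left, Equiv.swap_apply_of_ne_of_ne h1 (hExB s)]
        have hbg := fin_big_bot hn _ h1 (hExB s)
        exact iff_of_false hbg.asymm (hABlt.trans hbg).asymm
      · rw [Equiv.swap_apply_of_ne_of_ne h1 (hExB s), Equiv.swap_apply_of_ne_of_ne h2 (hExB u)]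
  · push_neg at hExA
    left
    refine ⟨f, hf, fun s u => (hpat' s u).trans ?_⟩
    rcases eq_or_ne (π (f s)) B with h1 | h1 <;> rcases eq_or_ne (π (f u)) B with h2 | h2
    · rw [h1, h2]; exact iff_of_false (lt_irrefl _) (lt_irrefl _)
    · rw [h1, Equiv.swap_apply_right, Equiv.swap_apply_of_ne_of_ne (hExA u) h2]
      have hbg := fin_big_bot hn _ (hExA u) h2
      exact iff_of_true (hABlt.trans hbg) hbg
    · rw [h2, Equiv.swap_apply_right, Equiv.swap_apply_of_ne_of_ne (hExA s) h1]
      have hbg := fin_big_bot hn _ (hExA s) h1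
      exact iff_of_false (hABlt.trans hbg).asymm hbg.asymm
    · rw [Equiv.swap_apply_of_ne_of_ne (hExA s) h1, Equiv.swap_apply_of_ne_of_ne (hExA u) h2]

end Transfer

section Transfer2

variable {n : ℕ}

lemma fin_lt_B_of_ne (hn : 2 ≤ n) (z : Fin n) (h : z ≠ (⟨n-1, by omega⟩ : Fin n)) :
    z < (⟨n-1, by omega⟩ : Fin n) := by
  have hv : z.val ≠ n-1 := fun hh => h (Fin.ext hh)
  have := z.isLt
  rw [Fin.lt_def]; simp only []; omega

lemma fin_lt_A_of_lt_B (hn : 2 ≤ n) (z : Fin n) (hzB : z < (⟨n-1, by omega⟩ : Fin n))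
    (hzA : z ≠ (⟨n-2, by omega⟩ : Fin n)) : z < (⟨n-2, by omega⟩ : Fin n) := by
  have hv : z.val ≠ n-2 := fun hh => hzA (Fin.ext hh)
  rw [Fin.lt_def] at hzB ⊢
  simp only [] at hzB ⊢
  omega

lemma fin_bot_le (hn : 2 ≤ n) (z : Fin n) : (⟨0, by omega⟩ : Fin n) ≤ z := by
  rw [Fin.le_def]; simp only []; omega

lemma fin_eq_B_of (hn : 2 ≤ n) (z : Fin n) (h1 : (⟨0, by omega⟩ : Fin n) < z)
    (h2 : z ≤ (⟨1, by omega⟩ : Fin n)) : z = (⟨1, by omega⟩ : Fin n) := by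
  rw [Fin.lt_def] at h1; rw [Fin.le_def] at h2
  exact Fin.ext (by simp only [] at h1 h2 ⊢; omega)

theorem transfer_plast (hn : 2 ≤ n) (π : Equiv.Perm (Fin n)) (σ : Equiv.Perm (Fin 3))
    (h : Contains (π * Equiv.swap (⟨n-2, by omega⟩ : Fin n) (⟨n-1, by omega⟩ : Fin n)) σ) :
    Contains π σ ∨ Contains π (σ * Equiv.swap (1 : Fin 3) 2) := by
  set A : Fin n := ⟨n-2, by omega⟩ with hA
  set B : Fin n := ⟨n-1, by omega⟩ with hB
  have hABlt : A < B := AB_lt_top hn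
  obtain ⟨f, hf, hpat⟩ := h
  have hpat' : ∀ s u : Fin 3, σ s < σ u ↔
      π (Equiv.swap A B (f s)) < π (Equiv.swap A B (f u)) := by
    intro s u; simpa using hpat s u
  have hf01 : f 0 < f 1 := hf (by decide)
  have hf12 : f 1 < f 2 := hf (by decide)
  by_cases h2 : f 2 = B
  · by_cases h1 : f 1 = A
    · right
      have hf0A : f 0 ≠ A := ne_of_lt (h1 ▸ hf01)
      have hf0B : f 0 ≠ B := ne_of_lt ((h1 ▸ hf01).trans hABlt)
      have key : ∀ s : Fin 3, Equiv.swap A B (f (Equiv.swap (1:Fin 3) 2 s)) = f s := by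
        intro s
        fin_cases s
        · show Equiv.swap A B (f ((Equiv.swap (1:Fin 3) 2) 0)) = f 0
          rw [show (Equiv.swap (1:Fin 3) 2) 0 = 0 from by decide]
          exact Equiv.swap_apply_of_ne_of_ne hf0A hf0B
        · show Equiv.swap A B (f ((Equiv.swap (1:Fin 3) 2) 1)) = f 1
          rw [show (Equiv.swap (1:Fin 3) 2) 1 = 2 from by decide, h2,
            Equiv.swap_apply_right, h1]
        · show Equiv.swap A B (f ((Equiv.swap (1:Fin 3) 2) 2)) = f 2
          rw [show (Equiv.swap (1:Fin 3) 2) 2 = 1 from by decide, h1,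
            Equiv.swap_apply_left, h2]
      refine ⟨f, hf, fun s u => ?_⟩
      have := hpat' (Equiv.swap (1:Fin 3) 2 s) (Equiv.swap (1:Fin 3) 2 u)
      rw [key s, key u] at this
      simpa [Equiv.Perm.mul_apply] using this
    · left
      have hf1B : f 1 < B := h2 ▸ hf12
      have hf1A : f 1 < A := fin_lt_A_of_lt_B hn _ hf1B h1
      refine ⟨fun s => Equiv.swap A B (f s), ?_, fun s u => hpat' s u⟩
      apply mono3
      · rw [Equiv.swap_apply_of_ne_of_ne (ne_of_lt (hf01.trans hf1A))
            (ne_of_lt ((hf01.trans hf1A).trans hABlt)),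
          Equiv.swap_apply_of_ne_of_ne (ne_of_lt hf1A) (ne_of_lt (hf1A.trans hABlt))]
        exact hf01
      · rw [Equiv.swap_apply_of_ne_of_ne (ne_of_lt hf1A) (ne_of_lt (hf1A.trans hABlt)), h2,
          Equiv.swap_apply_right]
        exact hf1A
  · have hf2B : f 2 < B := fin_lt_B_of_ne hn _ h2
    have hf1B : f 1 < B := hf12.trans hf2B
    have hf0B : f 0 < B := hf01.trans hf1B
    by_cases h2A : f 2 = A
    · left
      have hf1A : f 1 < A := h2A ▸ hf12
      refine ⟨fun s => Equiv.swap A B (f s), ?_, fun s u => hpat' s u⟩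
      apply mono3
      · rw [Equiv.swap_apply_of_ne_of_ne (ne_of_lt (hf01.trans hf1A)) (ne_of_lt hf0B),
          Equiv.swap_apply_of_ne_of_ne (ne_of_lt hf1A) (ne_of_lt hf1B)]
        exact hf01
      · rw [Equiv.swap_apply_of_ne_of_ne (ne_of_lt hf1A) (ne_of_lt hf1B), h2A,
          Equiv.swap_apply_left]
        exact hf1B
    · left
      have hf2A : f 2 < A := fin_lt_A_of_lt_B hn _ hf2B h2A
      refine ⟨fun s => Equiv.swap A B (f s), ?_, fun s u => hpat' s u⟩
      apply mono3
      · rw [Equiv.swap_apply_of_ne_of_ne (ne_of_lt (hf01.trans (hf12.trans hf2A)))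
            (ne_of_lt hf0B),
          Equiv.swap_apply_of_ne_of_ne (ne_of_lt (hf12.trans hf2A)) (ne_of_lt hf1B)]
        exact hf01
      · rw [Equiv.swap_apply_of_ne_of_ne (ne_of_lt (hf12.trans hf2A)) (ne_of_lt hf1B),
          Equiv.swap_apply_of_ne_of_ne (ne_of_lt hf2A) (ne_of_lt hf2B)]
        exact hf12

theorem transfer_pfirst (hn : 2 ≤ n) (π : Equiv.Perm (Fin n)) (σ : Equiv.Perm (Fin 3))
    (h : Contains (π * Equiv.swap (⟨0, by omega⟩ : Fin n) (⟨1, by omega⟩ : Fin n)) σ) :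
    Contains π σ ∨ Contains π (σ * Equiv.swap (0 : Fin 3) 1) := by
  set A : Fin n := ⟨0, by omega⟩ with hA
  set B : Fin n := ⟨1, by omega⟩ with hB
  have hABlt : A < B := AB_lt_bot hn
  obtain ⟨f, hf, hpat⟩ := h
  have hpat' : ∀ s u : Fin 3, σ s < σ u ↔
      π (Equiv.swap A B (f s)) < π (Equiv.swap A B (f u)) := by
    intro s u; simpa using hpat s u
  have hf01 : f 0 < f 1 := hf (by decide)
  have hf12 : f 1 < f 2 := hf (by decide)
  by_cases h0 : f 0 = A
  · by_cases h1 : f 1 = B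
    · right
      have hf2B : B < f 2 := h1 ▸ hf12
      have hf2A : f 2 ≠ A := ne_of_gt (hABlt.trans hf2B)
      have key : ∀ s : Fin 3, Equiv.swap A B (f (Equiv.swap (0:Fin 3) 1 s)) = f s := by
        intro s
        fin_cases s
        · show Equiv.swap A B (f ((Equiv.swap (0:Fin 3) 1) 0)) = f 0
          rw [show (Equiv.swap (0:Fin 3) 1) 0 = 1 from by decide, h1,
            Equiv.swap_apply_right, h0]
        · show Equiv.swap A B (f ((Equiv.swap (0:Fin 3) 1) 1)) = f 1
          rw [show (Equiv.swap (0:Fin 3) 1) 1 = 0 from by decide, h0,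
            Equiv.swap_apply_left, h1]
        · show Equiv.swap A B (f ((Equiv.swap (0:Fin 3) 1) 2)) = f 2
          rw [show (Equiv.swap (0:Fin 3) 1) 2 = 2 from by decide]
          exact Equiv.swap_apply_of_ne_of_ne hf2A (ne_of_gt hf2B)
      refine ⟨f, hf, fun s u => ?_⟩
      have := hpat' (Equiv.swap (0:Fin 3) 1 s) (Equiv.swap (0:Fin 3) 1 u)
      rw [key s, key u] at this
      simpa [Equiv.Perm.mul_apply] using this
    · left
      have hf1A : A < f 1 := h0 ▸ hf01
      have hf1B : B < f 1 := fin_big_bot hn _ (ne_of_gt hf1A) h1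
      have hf2B : B < f 2 := hf1B.trans hf12
      refine ⟨fun s => Equiv.swap A B (f s), ?_, fun s u => hpat' s u⟩
      apply mono3
      · rw [h0, Equiv.swap_apply_left,
          Equiv.swap_apply_of_ne_of_ne (ne_of_gt hf1A) (ne_of_gt hf1B)]
        exact hf1B
      · rw [Equiv.swap_apply_of_ne_of_ne (ne_of_gt hf1A) (ne_of_gt hf1B),
          Equiv.swap_apply_of_ne_of_ne (ne_of_gt (hABlt.trans hf2B)) (ne_of_gt hf2B)]
        exact hf12
  · have hf0A : A < f 0 := lt_of_le_of_ne (fin_bot_le hn _) (Ne.symm h0)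
    by_cases h0B : f 0 = B
    · left
      have hf1B : B < f 1 := h0B ▸ hf01
      have hf2B : B < f 2 := hf1B.trans hf12
      refine ⟨fun s => Equiv.swap A B (f s), ?_, fun s u => hpat' s u⟩
      apply mono3
      · rw [h0B, Equiv.swap_apply_right,
          Equiv.swap_apply_of_ne_of_ne (ne_of_gt (hABlt.trans hf1B)) (ne_of_gt hf1B)]
        exact hABlt.trans hf1B
      · rw [Equiv.swap_apply_of_ne_of_ne (ne_of_gt (hABlt.trans hf1B)) (ne_of_gt hf1B),
          Equiv.swap_apply_of_ne_of_ne (ne_of_gt (hABlt.trans hf2B)) (ne_of_gt hf2B)]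
        exact hf12
    · left
      have hf0B : B < f 0 := fin_big_bot hn _ (ne_of_gt hf0A) h0B
      have hf1B : B < f 1 := hf0B.trans hf01
      have hf2B : B < f 2 := hf1B.trans hf12
      refine ⟨fun s => Equiv.swap A B (f s), ?_, fun s u => hpat' s u⟩
      apply mono3
      · rw [Equiv.swap_apply_of_ne_of_ne (ne_of_gt hf0A) (ne_of_gt hf0B),
          Equiv.swap_apply_of_ne_of_ne (ne_of_gt (hABlt.trans hf1B)) (ne_of_gt hf1B)]
        exact hf01
      · rw [Equiv.swap_apply_of_ne_of_ne (ne_of_gt (hABlt.trans hf1B)) (ne_of_gt hf1B),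
          Equiv.swap_apply_of_ne_of_ne (ne_of_gt (hABlt.trans hf2B)) (ne_of_gt hf2B)]
        exact hf12

end Transfer2

section Assembly

open Finset

variable {n : ℕ}

lemma bal_vtop (hn : 2 ≤ n) (R : Set (Equiv.Perm (Fin 3)))
    (hR : ∀ σ ∈ R, Equiv.swap (1 : Fin 3) 2 * σ ∈ R) : SignBalanced (avoidSet n R) := by
  have hne : (⟨n-2, by omega⟩ : Fin n) ≠ ⟨n-1, by omega⟩ := ne_of_lt (AB_lt_top hn)
  apply signBalanced_of_invol _
    (fun π => Equiv.swap (⟨n-2, by omega⟩ : Fin n) ⟨n-1, by omega⟩ * π)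
  · intro π; rw [← mul_assoc, Equiv.swap_mul_self, one_mul]
  · intro π hπ σ hσ hcon
    rcases transfer_vtop hn π σ hcon with hc | hc
    · exact hπ σ hσ hc
    · exact hπ _ (hR σ hσ) hc
  · intro π; exact parity_flip_left _ _ hne π

lemma bal_vbot (hn : 2 ≤ n) (R : Set (Equiv.Perm (Fin 3)))
    (hR : ∀ σ ∈ R, Equiv.swap (0 : Fin 3) 1 * σ ∈ R) : SignBalanced (avoidSet n R) := by
  have hne : (⟨0, by omega⟩ : Fin n) ≠ ⟨1, by omega⟩ := ne_of_lt (AB_lt_bot hn)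
  apply signBalanced_of_invol _
    (fun π => Equiv.swap (⟨0, by omega⟩ : Fin n) ⟨1, by omega⟩ * π)
  · intro π; rw [← mul_assoc, Equiv.swap_mul_self, one_mul]
  · intro π hπ σ hσ hcon
    rcases transfer_vbot hn π σ hcon with hc | hc
    · exact hπ σ hσ hc
    · exact hπ _ (hR σ hσ) hc
  · intro π; exact parity_flip_left _ _ hne π

lemma bal_plast (hn : 2 ≤ n) (R : Set (Equiv.Perm (Fin 3)))
    (hR : ∀ σ ∈ R, σ * Equiv.swap (1 : Fin 3) 2 ∈ R) : SignBalanced (avoidSet n R) := by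
  have hne : (⟨n-2, by omega⟩ : Fin n) ≠ ⟨n-1, by omega⟩ := ne_of_lt (AB_lt_top hn)
  apply signBalanced_of_invol _
    (fun π => π * Equiv.swap (⟨n-2, by omega⟩ : Fin n) ⟨n-1, by omega⟩)
  · intro π; rw [mul_assoc, Equiv.swap_mul_self, mul_one]
  · intro π hπ σ hσ hcon
    rcases transfer_plast hn π σ hcon with hc | hc
    · exact hπ σ hσ hc
    · exact hπ _ (hR σ hσ) hc
  · intro π; exact parity_flip_right _ _ hne π

lemma bal_pfirst (hn : 2 ≤ n) (R : Set (Equiv.Perm (Fin 3)))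
    (hR : ∀ σ ∈ R, σ * Equiv.swap (0 : Fin 3) 1 ∈ R) : SignBalanced (avoidSet n R) := by
  have hne : (⟨0, by omega⟩ : Fin n) ≠ ⟨1, by omega⟩ := ne_of_lt (AB_lt_bot hn)
  apply signBalanced_of_invol _
    (fun π => π * Equiv.swap (⟨0, by omega⟩ : Fin n) ⟨1, by omega⟩)
  · intro π; rw [mul_assoc, Equiv.swap_mul_self, mul_one]
  · intro π hπ σ hσ hcon
    rcases transfer_pfirst hn π σ hcon with hc | hc
    · exact hπ σ hσ hc
    · exact hπ _ (hR σ hσ) hc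
  · intro π; exact parity_flip_right _ _ hne π

/-- A strictly monotone self-map of `Fin m` is the identity. -/
lemma fin_strictMono_id {m : ℕ} (f : Fin m → Fin m) (hf : StrictMono f) : ∀ x, f x = x := by
  have hwf : WellFoundedLT (Fin m) := inferInstance
  have hle : ∀ x : Fin m, x ≤ f x := fun x => StrictMono.le_apply hf
  have hbij : Function.Bijective f := (Finite.injective_iff_bijective).1 hf.injective
  have hsum : ∑ x : Fin m, (f x).val = ∑ x : Fin m, x.val :=
    Fintype.sum_bijective f hbij (fun x => (f x).val) (fun x => x.val) (fun x => rfl)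
  have := (Finset.sum_eq_sum_iff_of_le (s := Finset.univ)
    (f := fun x : Fin m => x.val) (g := fun x : Fin m => (f x).val)
    (fun i _ => hle i)).1 hsum.symm
  intro x
  exact (Fin.ext ((this x (Finset.mem_univ x)).symm))

lemma contains_self_iff {m : ℕ} (π σ : Equiv.Perm (Fin m)) : Contains π σ ↔ π = σ := by
  constructor
  · rintro ⟨f, hf, hp⟩
    have hfid := fin_strictMono_id f hf
    have hp' : ∀ s t : Fin m, σ s < σ t ↔ π s < π t := by
      intro s t; have := hp s t; rwa [hfid s, hfid t] at this
    have key : StrictMono (fun a => π (σ.symm a)) := by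
      intro a b hab
      exact (hp' (σ.symm a) (σ.symm b)).1 (by simpa using hab)
    have h2 := fin_strictMono_id _ key
    refine Equiv.ext fun x => ?_
    have := h2 (σ x)
    simpa using this
  · rintro rfl
    exact ⟨id, strictMono_id, fun s t => Iff.rfl⟩

def balF (F : Finset (Equiv.Perm (Fin 3))) : Prop :=
  (Finset.univ.filter (fun π => π ∈ F ∧ Even (invCount π))).card =
    (Finset.univ.filter (fun π => π ∈ F ∧ ¬ Even (invCount π))).card

instance : DecidablePred balF := fun F => by unfold balF; infer_instance

lemma signBalanced_coe_iff (F : Finset (Equiv.Perm (Fin 3))) :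
    SignBalanced (↑F : Set (Equiv.Perm (Fin 3))) ↔ balF F := by
  have hcoe : (↑F : Set (Equiv.Perm (Fin 3))) = {π | π ∈ F} := by ext; simp
  rw [hcoe, signBalanced_iff_filter]
  exact Iff.rfl

def badF : Finset (Equiv.Perm (Fin 3)) := {q132, q213, q231, q312}
def specF : Finset (Equiv.Perm (Fin 3)) := {q123, q321}

set_option synthInstance.maxSize 2000 in
set_option synthInstance.maxHeartbeats 1000000 in
set_option maxRecDepth 40000 in
lemma classify : ∀ F : Finset (Equiv.Perm (Fin 3)), balF F → F ≠ badF →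
    ((∀ σ ∈ F, Equiv.swap (1:Fin 3) 2 * σ ∈ F) ∨
     (∀ σ ∈ F, Equiv.swap (0:Fin 3) 1 * σ ∈ F) ∨
     (∀ σ ∈ F, σ * Equiv.swap (1:Fin 3) 2 ∈ F) ∨
     (∀ σ ∈ F, σ * Equiv.swap (0:Fin 3) 1 ∈ F) ∨
     F = specF) := by decide

set_option synthInstance.maxSize 2000 in
set_option synthInstance.maxHeartbeats 1000000 in
set_option maxRecDepth 40000 in
lemma balcompl : ∀ F : Finset (Equiv.Perm (Fin 3)), balF Fᶜ → balF F := by decide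

lemma avoid3_coe (F : Finset (Equiv.Perm (Fin 3))) :
    avoidSet 3 (↑F : Set (Equiv.Perm (Fin 3))) = ↑(Fᶜ) := by
  ext π
  simp only [avoidSet, Set.mem_setOf_eq, Finset.coe_compl, Set.mem_compl_iff,
    Finset.mem_coe]
  constructor
  · intro h hmem
    exact h π hmem ((contains_self_iff π π).2 rfl)
  · intro h σ hσ hcon
    exact h (by rw [(contains_self_iff π σ).1 hcon]; exact hσ)

set_option maxRecDepth 10000 in
lemma es5 : ∀ ρ : Equiv.Perm (Fin 5), ∃ i j k : Fin 5, i < j ∧ j < k ∧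
    ((ρ i < ρ j ∧ ρ j < ρ k) ∨ (ρ k < ρ j ∧ ρ j < ρ i)) := by decide

lemma contains_mono_pattern (hn : 5 ≤ n) (π : Equiv.Perm (Fin n)) :
    Contains π q123 ∨ Contains π q321 := by
  set v : Fin 5 → Fin n := fun i => π (Fin.castLE hn i) with hv
  have hvinj : Function.Injective v := fun a b h =>
    Fin.castLE_injective hn (π.injective h)
  have hcard : ∀ i : Fin 5, (Finset.univ.filter (fun j => v j < v i)).card < 5 := by
    intro i
    have hsub : (Finset.univ.filter (fun j => v j < v i)) ⊆ Finset.univ.erase i := by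
      intro j hj
      rw [Finset.mem_filter] at hj
      refine Finset.mem_erase.2 ⟨fun he => ?_, Finset.mem_univ _⟩
      rw [he] at hj
      exact lt_irrefl _ hj.2
    have h1 := Finset.card_le_card hsub
    have h2 : (Finset.univ.erase i).card = 4 := by
      rw [Finset.card_erase_of_mem (Finset.mem_univ i)]
      simp
    omega
  set r : Fin 5 → Fin 5 := fun i => ⟨_, hcard i⟩ with hr
  have hmono : ∀ a b : Fin 5, v a < v b → r a < r b := by
    intro a b hab
    rw [Fin.lt_def]
    show (Finset.univ.filter (fun j => v j < v a)).card < (Finset.univ.filter (fun j => v j < v b)).card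
    apply Finset.card_lt_card
    rw [Finset.ssubset_iff_of_subset (fun j hj => by
      rw [Finset.mem_filter] at hj ⊢
      exact ⟨hj.1, hj.2.trans hab⟩)]
    exact ⟨a, by rw [Finset.mem_filter]; exact ⟨Finset.mem_univ _, hab⟩,
      fun hc => lt_irrefl _ (Finset.mem_filter.1 hc).2⟩
  have hiff : ∀ a b : Fin 5, v a < v b ↔ r a < r b := by
    intro a b
    refine ⟨hmono a b, fun hrab => ?_⟩
    rcases lt_trichotomy (v a) (v b) with h | h | h
    · exact h
    · exact absurd (hvinj h ▸ hrab) (lt_irrefl _)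
    · exact absurd hrab (hmono b a h).asymm
  have hrinj : Function.Injective r := by
    intro a b hab
    by_contra hne
    rcases lt_or_gt_of_ne (fun he : v a = v b => hne (hvinj he)) with h | h
    · exact absurd (hab ▸ hmono a b h) (lt_irrefl _)
    · exact absurd (hab ▸ hmono b a h) (lt_irrefl _)
  obtain ⟨i, j, k, hij, hjk, hpat⟩ :=
    es5 (Equiv.ofBijective r ((Finite.injective_iff_bijective).1 hrinj))
  have hρ : ∀ a : Fin 5, (Equiv.ofBijective r ((Finite.injective_iff_bijective).1 hrinj)) a
      = r a := fun a => rfl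
  rw [hρ, hρ] at hpat
  rw [hρ] at hpat
  have mij : Fin.castLE hn i < Fin.castLE hn j := by
    rw [Fin.lt_def] at hij ⊢; exact hij
  have mjk : Fin.castLE hn j < Fin.castLE hn k := by
    rw [Fin.lt_def] at hjk ⊢; exact hjk
  rcases hpat with ⟨h1, h2⟩ | ⟨h1, h2⟩
  · left
    refine ⟨![Fin.castLE hn i, Fin.castLE hn j, Fin.castLE hn k], mono3 mij mjk,
      pat_of_ranks q123 _ 0 1 2 (by decide) (by decide) (by decide)
        (by decide) (by decide) (by decide) ?_ ?_⟩
    · show v i < v j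
      exact (hiff i j).2 h1
    · show v j < v k
      exact (hiff j k).2 h2
  · right
    refine ⟨![Fin.castLE hn i, Fin.castLE hn j, Fin.castLE hn k], mono3 mij mjk,
      pat_of_ranks q321 _ 2 1 0 (by decide) (by decide) (by decide)
        (by decide) (by decide) (by decide) ?_ ?_⟩
    · show v k < v j
      exact (hiff k j).2 h1
    · show v j < v i
      exact (hiff j i).2 h2

lemma avoid_pair (m : ℕ) (a b : Equiv.Perm (Fin 3)) :
    avoidSet m ({a, b} : Set (Equiv.Perm (Fin 3))) =
      {π | ¬ Contains π a ∧ ¬ Contains π b} := by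
  ext π
  simp [avoidSet, Avoids]

lemma avoid_quad (m : ℕ) (a b c d : Equiv.Perm (Fin 3)) :
    avoidSet m ({a, b, c, d} : Set (Equiv.Perm (Fin 3))) =
      {π | ¬ Contains π a ∧ ¬ Contains π b ∧ ¬ Contains π c ∧ ¬ Contains π d} := by
  ext π
  simp [avoidSet, Avoids]

lemma signBalanced_empty {m : ℕ} : SignBalanced (∅ : Set (Equiv.Perm (Fin m))) := by
  have e1 : {π ∈ (∅ : Set (Equiv.Perm (Fin m))) | Even (invCount π)} = ∅ := by ext; simp
  have e2 : {π ∈ (∅ : Set (Equiv.Perm (Fin m))) | ¬ Even (invCount π)} = ∅ := by ext; simp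
  unfold SignBalanced
  rw [e1, e2]

set_option maxRecDepth 40000 in
lemma spec2 : SignBalanced (avoidSet 2 ({q123, q321} : Set (Equiv.Perm (Fin 3)))) := by
  rw [avoid_pair, signBalanced_iff_filter]
  decide

set_option maxRecDepth 40000 in
lemma spec3 : SignBalanced (avoidSet 3 ({q123, q321} : Set (Equiv.Perm (Fin 3)))) := by
  rw [avoid_pair, signBalanced_iff_filter]
  decide

set_option maxRecDepth 40000 in
lemma spec4 : SignBalanced (avoidSet 4 ({q123, q321} : Set (Equiv.Perm (Fin 3)))) := by
  rw [avoid_pair, signBalanced_iff_filter]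
  decide

set_option maxRecDepth 40000 in
lemma notbal4 : ¬ SignBalanced (avoidSet 4 ({q132, q213, q231, q312} :
    Set (Equiv.Perm (Fin 3)))) := by
  rw [avoid_quad, signBalanced_iff_filter]
  decide

lemma bal_spec : ∀ m : ℕ, 2 ≤ m →
    SignBalanced (avoidSet m ({q123, q321} : Set (Equiv.Perm (Fin 3)))) := by
  intro m hm
  match m, hm with
  | 2, _ => exact spec2
  | 3, _ => exact spec3
  | 4, _ => exact spec4
  | (m+5), _ => 
    have h5 : 5 ≤ m + 5 := by omega
    have hempty : avoidSet (m+5) ({q123, q321} : Set (Equiv.Perm (Fin 3))) = ∅ := by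
      ext π
      rw [avoid_pair]
      simp only [Set.mem_setOf_eq, Set.mem_empty_iff_false, iff_false, not_and, not_not]
      intro h1
      rcases contains_mono_pattern h5 π with hc | hc
      · exact absurd hc h1
      · exact hc
    rw [hempty]
    exact signBalanced_empty

end Assembly

/-- For patterns in `S_3`: `S_n(R)` is sign-balanced for every `n > 1` iff `R` itself
is sign-balanced and `R ≠ {132, 213, 231, 312}`. -/
theorem stmt_14 (R : Set (Equiv.Perm (Fin 3))) :
    (∀ n : ℕ, 2 ≤ n → SignBalanced (avoidSet n R)) ↔
      (SignBalanced R ∧ R ≠ ({p132, p213, p231, p312} : Set (Equiv.Perm (Fin 3)))) := by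
  obtain ⟨F, hF⟩ : ∃ F : Finset (Equiv.Perm (Fin 3)), (↑F : Set (Equiv.Perm (Fin 3))) = R :=
    ⟨(Set.toFinite R).toFinset, Set.Finite.coe_toFinset _⟩
  subst hF
  rw [pq132, pq213, pq231, pq312]
  have hbadcoe : (↑badF : Set (Equiv.Perm (Fin 3))) = {q132, q213, q231, q312} := by
    simp [badF]
  constructor
  · intro h
    constructor
    · have h3 := h 3 (by norm_num)
      rw [avoid3_coe, signBalanced_coe_iff] at h3
      rw [signBalanced_coe_iff]
      exact balcompl F h3
    · intro hbad
      have h4 := h 4 (by norm_num)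
      rw [hbad] at h4
      exact notbal4 h4
  · rintro ⟨hbal, hne⟩ n hn
    rw [signBalanced_coe_iff] at hbal
    have hneF : F ≠ badF := fun hh => hne (by rw [hh, hbadcoe])
    rcases classify F hbal hneF with hc | hc | hc | hc | hc
    · exact bal_vtop hn _ (fun σ hσ => by
        simpa using hc σ (by simpa using hσ))
    · exact bal_vbot hn _ (fun σ hσ => by
        simpa using hc σ (by simpa using hσ))
    · exact bal_plast hn _ (fun σ hσ => by
        simpa using hc σ (by simpa using hσ))
    · exact bal_pfirst hn _ (fun σ hσ => by
        simpa using hc σ (by simpa using hσ))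
    · rw [hc, show (↑specF : Set (Equiv.Perm (Fin 3))) = {q123, q321} from by simp [specF]]
      exact bal_spec n hn
end

section
/- For every integer n > 1, the set S_n(1243, 2143) of permutations of {1,...,n} avoiding both patterns 1243 and 2143 is sign-balanced. -/
section Aux

open Equiv

/-- The swap of the two least elements is monotone on all increasing pairs except `(a,b)`. -/
lemma aux_cmono {n : ℕ} {a b : Fin n} (h0 : (a : ℕ) = 0) (h1 : (b : ℕ) = 1)
    {x y : Fin n} (hxy : x < y) (hne : ¬(x = a ∧ y = b)) :
    Equiv.swap a b x < Equiv.swap a b y := by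
  have hval : ∀ u v : Fin n, u ≠ v → (u : ℕ) ≠ (v : ℕ) := by
    intro u v h h'; exact h (Fin.ext h')
  have hya : y ≠ a := by
    intro h; subst h
    rw [Fin.lt_def] at hxy; omega
  rcases eq_or_ne x a with hxa | hxa
  · have hyb : y ≠ b := fun h => hne ⟨hxa, h⟩
    rw [hxa, Equiv.swap_apply_left, Equiv.swap_apply_of_ne_of_ne hya hyb]
    have h2 := hval y a hya
    have h3 := hval y b hyb
    rw [Fin.lt_def]; omega
  rcases eq_or_ne x b with hxb | hxb
  · have hyb : y ≠ b := by rw [← hxb]; exact ne_of_gt hxy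
    rw [hxb] at hxy
    rw [hxb, Equiv.swap_apply_right, Equiv.swap_apply_of_ne_of_ne hya hyb]
    rw [Fin.lt_def] at hxy ⊢
    have h3 := hval y b hyb
    omega
  · have h2 := hval x a hxa
    have h3 := hval x b hxb
    have hyb : y ≠ b := by
      intro h; subst h; rw [Fin.lt_def] at hxy; omega
    rw [Equiv.swap_apply_of_ne_of_ne hxa hxb, Equiv.swap_apply_of_ne_of_ne hya hyb]
    exact hxy

/-- Multiplying on the right by the swap of the two least positions flips the parity of the
inversion count. -/
lemma aux_parity {n : ℕ} {a b : Fin n} (h0 : (a : ℕ) = 0) (h1 : (b : ℕ) = 1)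
    (π : Equiv.Perm (Fin n)) :
    Even (invCount (π * Equiv.swap a b)) ↔ ¬ Even (invCount π) := by
  classical
  set c := Equiv.swap a b with hc
  have hab : a ≠ b := by
    intro h; rw [h, h1] at h0; exact absurd h0 one_ne_zero
  have hcc : ∀ x, c (c x) = x := fun x => Equiv.swap_apply_self a b x
  set q : Fin n × Fin n := (a, b) with hq
  set A := Finset.univ.filter
    (fun p : Fin n × Fin n => p.1 < p.2 ∧ (π * c) p.2 < (π * c) p.1) with hA
  set B := Finset.univ.filter
    (fun p : Fin n × Fin n => p.1 < p.2 ∧ π p.2 < π p.1) with hB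
  have hmemA : ∀ p : Fin n × Fin n, p ∈ A ↔ p.1 < p.2 ∧ π (c p.2) < π (c p.1) := by
    intro p; rw [hA, Finset.mem_filter]; simp [Equiv.Perm.mul_apply]
  have hmemB : ∀ p : Fin n × Fin n, p ∈ B ↔ p.1 < p.2 ∧ π p.2 < π p.1 := by
    intro p; simp [hB]
  have hne_of_ne : ∀ p : Fin n × Fin n, p.1 < p.2 → p ≠ q → ¬(p.1 = a ∧ p.2 = b) := by
    rintro p _ hpq ⟨ha', hb'⟩
    exact hpq (Prod.ext ha' hb')
  have himg_ne : ∀ p : Fin n × Fin n, p.1 < p.2 → (c p.1, c p.2) ≠ q := by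
    intro p hp h
    have h1' : c p.1 = a := congrArg Prod.fst h
    have h2' : c p.2 = b := congrArg Prod.snd h
    have e1 : p.1 = b := by
      have := congrArg c h1'; rwa [hcc, Equiv.swap_apply_left] at this
    have e2 : p.2 = a := by
      have := congrArg c h2'; rwa [hcc, Equiv.swap_apply_right] at this
    rw [e1, e2, Fin.lt_def] at hp; omega
  have hcard : (A.erase q).card = (B.erase q).card := by
    apply Finset.card_bij' (fun p _ => (c p.1, c p.2)) (fun p _ => (c p.1, c p.2))
    · intro p hp
      rw [Finset.mem_erase] at hp
      obtain ⟨hpq, hpA⟩ := hp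
      rw [hmemA] at hpA
      rw [Finset.mem_erase, hmemB]
      refine ⟨himg_ne p hpA.1, aux_cmono h0 h1 hpA.1 (hne_of_ne p hpA.1 hpq), ?_⟩
      simpa [hcc] using hpA.2
    · intro p hp
      rw [Finset.mem_erase] at hp
      obtain ⟨hpq, hpB⟩ := hp
      rw [hmemB] at hpB
      rw [Finset.mem_erase, hmemA]
      refine ⟨himg_ne p hpB.1, aux_cmono h0 h1 hpB.1 (hne_of_ne p hpB.1 hpq), ?_⟩
      simpa [hcc] using hpB.2
    · intro p _; simp [hcc]
    · intro p _; simp [hcc]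
  have hqmem : q ∈ A ↔ q ∉ B := by
    rw [hmemA, hmemB]
    have hab' : a < b := by rw [Fin.lt_def]; omega
    have hπab : π a ≠ π b := fun h => hab (π.injective h)
    simp only [hq, hc, Equiv.swap_apply_left, Equiv.swap_apply_right]
    constructor
    · rintro ⟨-, h⟩ ⟨-, h'⟩; exact absurd (h.trans h') (lt_irrefl _)
    · intro h
      refine ⟨hab', ?_⟩
      rcases lt_or_gt_of_ne hπab with h' | h'
      · exact h'
      · exact absurd ⟨hab', h'⟩ h
  have hAeq : invCount (π * c) = A.card := rfl
  have hBeq : invCount π = B.card := rfl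
  by_cases hqa : q ∈ A
  · have hqb : q ∉ B := hqmem.mp hqa
    have e1 : (A.erase q).card + 1 = A.card := Finset.card_erase_add_one hqa
    have e2 : B.erase q = B := Finset.erase_eq_of_notMem hqb
    rw [hAeq, hBeq, ← e1, ← e2, hcard, Nat.even_add_one]
  · have hqb : q ∈ B := by by_contra h; exact hqa (hqmem.mpr h)
    have e1 : A.erase q = A := Finset.erase_eq_of_notMem hqa
    have e2 : (B.erase q).card + 1 = B.card := Finset.card_erase_add_one hqb
    rw [hAeq, hBeq, ← e1, ← e2, ← hcard, Nat.even_add_one, not_not]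

/-- If `π · swap a b` contains `σ`, then `π` contains `σ` or `σ · swap 0 1`. -/
lemma aux_contains {n : ℕ} {a b : Fin n} (h0 : (a : ℕ) = 0) (h1 : (b : ℕ) = 1)
    (π : Equiv.Perm (Fin n)) (σ : Equiv.Perm (Fin 4))
    (h : Contains (π * Equiv.swap a b) σ) :
    Contains π σ ∨ Contains π (σ * Equiv.swap (0 : Fin 4) 1) := by
  obtain ⟨f, hf, hpat⟩ := h
  simp only [Equiv.Perm.mul_apply] at hpat
  have hab : a ≠ b := by
    intro h; rw [h, h1] at h0; exact absurd h0 one_ne_zero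
  by_cases hr : a ∈ Set.range f ∧ b ∈ Set.range f
  · right
    obtain ⟨⟨s0, hs0⟩, ⟨s1, hs1⟩⟩ := hr
    have hf0 : f 0 = a := by
      have hle : f 0 ≤ f s0 := hf.monotone (Fin.zero_le s0)
      rw [hs0] at hle
      have hge : a ≤ f 0 := by rw [Fin.le_def, h0]; omega
      exact le_antisymm hle hge
    have hf1 : f 1 = b := by
      have hs1ne : s1 ≠ 0 := by
        intro h; rw [h, hf0] at hs1; exact hab hs1
      have h1le : (1 : Fin 4) ≤ s1 := by
        rw [Fin.le_def]
        have := Fin.pos_of_ne_zero hs1ne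
        rw [Fin.lt_def] at this
        have e0 : ((0 : Fin 4) : ℕ) = 0 := rfl
        have e1 : ((1 : Fin 4) : ℕ) = 1 := rfl
        omega
      have hle : f 1 ≤ b := by
        have := hf.monotone h1le; rwa [hs1] at this
      have hgt : a < f 1 := by
        have := hf (show (0 : Fin 4) < 1 by decide); rwa [hf0] at this
      rw [Fin.lt_def, h0] at hgt
      rw [Fin.le_def, h1] at hle
      apply Fin.ext; omega
    have key : ∀ s : Fin 4, Equiv.swap a b (f (Equiv.swap (0 : Fin 4) 1 s)) = f s := by
      intro s
      by_cases hs : s = 0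
      · subst hs
        rw [Equiv.swap_apply_left, hf1, Equiv.swap_apply_right, hf0]
      by_cases hs' : s = 1
      · subst hs'
        rw [Equiv.swap_apply_right, hf0, Equiv.swap_apply_left, hf1]
      · rw [Equiv.swap_apply_of_ne_of_ne hs hs']
        have h2 : (1 : Fin 4) < s := by
          rw [Fin.lt_def]
          have hv0 : (s : ℕ) ≠ 0 := fun h => hs (Fin.ext h)
          have hv1 : (s : ℕ) ≠ 1 := fun h => hs' (Fin.ext h)
          simp only [Fin.val_one]; omega
        have hgt : f 1 < f s := hf h2
        rw [hf1] at hgt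
        have hna : f s ≠ a := by
          intro h; rw [h, Fin.lt_def] at hgt; omega
        have hnb : f s ≠ b := ne_of_gt hgt
        exact Equiv.swap_apply_of_ne_of_ne hna hnb
    refine ⟨f, hf, fun s t => ?_⟩
    have := hpat (Equiv.swap (0 : Fin 4) 1 s) (Equiv.swap (0 : Fin 4) 1 t)
    rw [key s, key t] at this
    simpa [Equiv.Perm.mul_apply] using this
  · left
    refine ⟨fun s => Equiv.swap a b (f s), ?_, fun s t => hpat s t⟩
    intro s t hst
    apply aux_cmono h0 h1 (hf hst)
    rintro ⟨hfa, hfb⟩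
    exact hr ⟨⟨s, hfa⟩, ⟨t, hfb⟩⟩

lemma aux_p1243_swap : p1243 * Equiv.swap (0 : Fin 4) 1 = p2143 := by
  ext i
  fin_cases i <;>
    simp [p1243, p2143, Equiv.Perm.mul_apply, Equiv.swap_apply_def, Equiv.ofBijective]

lemma aux_p2143_swap : p2143 * Equiv.swap (0 : Fin 4) 1 = p1243 := by
  ext i
  fin_cases i <;>
    simp [p1243, p2143, Equiv.Perm.mul_apply, Equiv.swap_apply_def, Equiv.ofBijective]

lemma aux_avoid_step {n : ℕ} {a b : Fin n} (h0 : (a : ℕ) = 0) (h1 : (b : ℕ) = 1)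
    {π : Equiv.Perm (Fin n)} (hπ : π ∈ avoidSet n {p1243, p2143}) :
    π * Equiv.swap a b ∈ avoidSet n {p1243, p2143} := by
  intro σ hσ hcont
  rcases aux_contains h0 h1 π σ hcont with h | h
  · exact hπ σ hσ h
  · rcases hσ with rfl | rfl
    · rw [aux_p1243_swap] at h
      exact hπ p2143 (Or.inr rfl) h
    · rw [aux_p2143_swap] at h
      exact hπ p1243 (Or.inl rfl) h

end Aux

/-- `S_n(1243, 2143)` is sign-balanced for every `n > 1`. -/
theorem stmt_16 (n : ℕ) (hn : 2 ≤ n) :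
    SignBalanced (avoidSet n {p1243, p2143}) := by
  classical
  set a : Fin n := ⟨0, by omega⟩ with ha
  set b : Fin n := ⟨1, by omega⟩ with hb
  have h0 : (a : ℕ) = 0 := rfl
  have h1 : (b : ℕ) = 1 := rfl
  set c := Equiv.swap a b with hc
  set S := avoidSet n {p1243, p2143} with hS
  set E := {π ∈ S | Even (invCount π)} with hE
  set O := {π ∈ S | ¬ Even (invCount π)} with hO
  have hinv : ∀ π : Equiv.Perm (Fin n), (π * c) * c = π := by
    intro π; rw [mul_assoc, Equiv.swap_mul_self, mul_one]
  have himg : (fun π : Equiv.Perm (Fin n) => π * c) '' E = O := by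
    ext π
    constructor
    · rintro ⟨ρ, ⟨hρS, hρE⟩, rfl⟩
      refine ⟨aux_avoid_step h0 h1 hρS, ?_⟩
      rw [aux_parity h0 h1, not_not]
      exact hρE
    · rintro ⟨hπS, hπO⟩
      refine ⟨π * c, ⟨aux_avoid_step h0 h1 hπS, ?_⟩, hinv π⟩
      rw [aux_parity h0 h1]
      exact hπO
  have hinj : Function.Injective (fun π : Equiv.Perm (Fin n) => π * c) :=
    fun x y h => mul_right_cancel h
  show E.ncard = O.ncard
  rw [← himg, Set.ncard_image_of_injective _ hinj]
end

section
/- For every integer n > 1, the set S_n(1423, 1432) of permutations of {1,...,n} avoiding both patterns 1423 and 1432 is sign-balanced. -/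
/-- Adjacent swap is order preserving on pairs other than `(a,b)` itself. -/
lemma swap_pair_mono {n : ℕ} {a b : Fin n} (hab : (a : ℕ) + 1 = b)
    {i j : Fin n} (hij : i < j) (hne : ¬ (i = a ∧ j = b)) :
    Equiv.swap a b i < Equiv.swap a b j := by
  have hne' : (i : ℕ) ≠ a ∨ (j : ℕ) ≠ b := by
    by_contra h
    push_neg at h
    exact hne ⟨Fin.ext h.1, Fin.ext h.2⟩
  simp only [Equiv.swap_apply_def, Fin.lt_def] at hij ⊢
  split_ifs <;> simp_all [Fin.ext_iff] <;> omega

lemma swap_fix_of_lt {n : ℕ} {a b x : Fin n} (hab : a < b) (hx : x < a) :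
    Equiv.swap a b x = x :=
  Equiv.swap_apply_of_ne_of_ne (ne_of_lt hx) (ne_of_lt (lt_trans hx hab))

/-- A function from `Fin 4` is strictly monotone iff consecutive values increase. -/
lemma strictMono_fin4 {α : Type*} [Preorder α] {f : Fin 4 → α}
    (h0 : f 0 < f 1) (h1 : f 1 < f 2) (h2 : f 2 < f 3) : StrictMono f := by
  rw [Fin.strictMono_iff_lt_succ]
  intro i
  fin_cases i <;> assumption

/-- Key pattern-transfer lemma: composing with the swap of the top two positions
(with `b` the maximum position and `a` just below it) either preserves containment
of a length-4 pattern, or turns it into containment of the pattern with the last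
two entries exchanged. -/
lemma contains_transfer {n : ℕ} {a b : Fin n} (hab : (a : ℕ) + 1 = b)
    (htop : ∀ x : Fin n, x ≤ b) (π : Equiv.Perm (Fin n)) (σ : Equiv.Perm (Fin 4))
    (h : Contains (π * Equiv.swap a b) σ) :
    Contains π σ ∨ Contains π (σ * Equiv.swap (2 : Fin 4) 3) := by
  obtain ⟨f, hf, hord⟩ := h
  have haltb : a < b := by rw [Fin.lt_def]; omega
  have hord' : ∀ s u : Fin 4, σ s < σ u ↔
      π (Equiv.swap a b (f s)) < π (Equiv.swap a b (f u)) := by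
    intro s u; simpa [Equiv.Perm.mul_apply] using hord s u
  have h01 : f 0 < f 1 := hf (by decide)
  have h12 : f 1 < f 2 := hf (by decide)
  have h23 : f 2 < f 3 := hf (by decide)
  have hlt : ∀ x : Fin n, x < b → x ≠ a → x < a := by
    intro x h1 h2
    rw [Fin.lt_def] at h1 ⊢
    have := (Fin.ext_iff (a := x) (b := a)).not.mp h2
    omega
  by_cases h3 : f 3 = b
  · by_cases h2 : f 2 = a
    · -- last two positions are exactly a, b : pattern's last two entries swap
      right
      refine ⟨f, hf, ?_⟩
      have h1a : f 1 < a := h2 ▸ h12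
      have h0a : f 0 < a := lt_trans h01 h1a
      have key : ∀ s : Fin 4,
          Equiv.swap a b (f (Equiv.swap (2 : Fin 4) 3 s)) = f s := by
        intro s
        fin_cases s
        · simpa [Equiv.swap_apply_def] using swap_fix_of_lt haltb h0a
        · simpa [Equiv.swap_apply_def] using swap_fix_of_lt haltb h1a
        · simp [Equiv.swap_apply_of_ne_of_ne, h3, Equiv.swap_apply_right, h2]
        · simp [h2, Equiv.swap_apply_left, h3]
      intro s u
      simp only [Equiv.Perm.mul_apply]
      rw [hord' (Equiv.swap (2 : Fin 4) 3 s) (Equiv.swap (2 : Fin 4) 3 u),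
        key s, key u]
    · -- f 2 < a : replace f 3 = b with a
      left
      have h2a : f 2 < a := hlt _ (h3 ▸ h23) h2
      refine ⟨fun i => if i = 3 then a else f i, ?_, ?_⟩
      · refine strictMono_fin4 ?_ ?_ ?_ <;>
          simp [lt_trans h01 h12, h01, h12, h2a]
      · intro s u
        have key : ∀ s : Fin 4,
            Equiv.swap a b (f s) = if s = 3 then a else f s := by
          intro s
          fin_cases s
          · simpa using swap_fix_of_lt haltb (lt_trans h01 (lt_trans h12 h2a))
          · simpa using swap_fix_of_lt haltb (lt_trans h12 h2a)
          · simpa using swap_fix_of_lt haltb h2a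
          · simp [h3, Equiv.swap_apply_right]
        rw [hord' s u, key s, key u]
  · -- f 3 < b
    have h3b : f 3 < b := lt_of_le_of_ne (htop _) h3
    by_cases h3a : f 3 = a
    · -- replace f 3 = a with b
      left
      have h2a : f 2 < a := h3a ▸ h23
      refine ⟨fun i => if i = 3 then b else f i, ?_, ?_⟩
      · refine strictMono_fin4 ?_ ?_ ?_ <;>
          simp [h01, h12, lt_trans h2a haltb]
      · intro s u
        have key : ∀ s : Fin 4,
            Equiv.swap a b (f s) = if s = 3 then b else f s := by
          intro s
          fin_cases s
          · simpa using swap_fix_of_lt haltb (lt_trans h01 (lt_trans h12 h2a))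
          · simpa using swap_fix_of_lt haltb (lt_trans h12 h2a)
          · simpa using swap_fix_of_lt haltb h2a
          · simp [h3a, Equiv.swap_apply_left]
        rw [hord' s u, key s, key u]
    · -- everything below a : swap acts as identity on the occurrence
      left
      have h3a' : f 3 < a := hlt _ h3b h3a
      refine ⟨f, hf, ?_⟩
      intro s u
      have key : ∀ s : Fin 4, Equiv.swap a b (f s) = f s := by
        intro s
        have : f s ≤ f 3 := hf.monotone (by fin_cases s <;> decide)
        exact swap_fix_of_lt haltb (lt_of_le_of_lt this h3a')
      rw [hord' s u, key s, key u]

lemma p1423_mul_swap : p1423 * Equiv.swap (2 : Fin 4) 3 = p1432 := by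
  ext i
  fin_cases i <;>
    simp [p1423, p1432, Equiv.Perm.mul_apply, Equiv.swap_apply_def,
      Equiv.ofBijective] 

lemma p1432_mul_swap : p1432 * Equiv.swap (2 : Fin 4) 3 = p1423 := by
  ext i
  fin_cases i <;>
    simp [p1423, p1432, Equiv.Perm.mul_apply, Equiv.swap_apply_def,
      Equiv.ofBijective]

/-- The avoid set is closed under composing with the swap of the top two positions. -/
lemma avoid_mul_swap {n : ℕ} {a b : Fin n} (hab : (a : ℕ) + 1 = b)
    (htop : ∀ x : Fin n, x ≤ b) {π : Equiv.Perm (Fin n)}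
    (h : π ∈ avoidSet n {p1423, p1432}) :
    π * Equiv.swap a b ∈ avoidSet n {p1423, p1432} := by
  intro σ hσ hc
  rcases contains_transfer hab htop π σ hc with h1 | h2
  · exact h σ hσ h1
  · rcases hσ with rfl | rfl
    · rw [p1423_mul_swap] at h2
      exact h p1432 (by simp) h2
    · rw [p1432_mul_swap] at h2
      exact h p1423 (by simp) h2

lemma invCount_split {n : ℕ} {a b : Fin n} (hab : a < b) (ρ : Equiv.Perm (Fin n)) :
    invCount ρ = (Finset.univ.filter
        (fun p : Fin n × Fin n => (p.1 < p.2 ∧ ρ p.2 < ρ p.1) ∧ p ≠ (a, b))).card +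
      (if ρ b < ρ a then 1 else 0) := by
  classical
  unfold invCount
  have hset : Finset.univ.filter
      (fun p : Fin n × Fin n => (p.1 < p.2 ∧ ρ p.2 < ρ p.1) ∧ p ≠ (a, b)) =
      (Finset.univ.filter
        (fun p : Fin n × Fin n => p.1 < p.2 ∧ ρ p.2 < ρ p.1)).erase (a, b) := by
    rw [← Finset.filter_filter, Finset.filter_ne']
  rw [hset]
  by_cases hm : (a, b) ∈ Finset.univ.filter
      (fun p : Fin n × Fin n => p.1 < p.2 ∧ ρ p.2 < ρ p.1)
  · have hmem := Finset.mem_filter.mp hm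
    rw [if_pos hmem.2.2, Finset.card_erase_of_mem hm]
    have : 1 ≤ (Finset.univ.filter
        (fun p : Fin n × Fin n => p.1 < p.2 ∧ ρ p.2 < ρ p.1)).card :=
      Finset.card_pos.mpr ⟨_, hm⟩
    omega
  · have hnot : ¬ ρ b < ρ a := by
      intro hc
      exact hm (Finset.mem_filter.mpr ⟨Finset.mem_univ _, hab, hc⟩)
    rw [if_neg hnot, Finset.erase_eq_of_notMem hm]
    omega

/-- Composing with an adjacent transposition flips the parity of the inversion count. -/
lemma invCount_parity_flip {n : ℕ} {a b : Fin n} (hab : (a : ℕ) + 1 = b)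
    (π : Equiv.Perm (Fin n)) :
    Odd (invCount (π * Equiv.swap a b) + invCount π) := by
  classical
  have haltb : a < b := by rw [Fin.lt_def]; omega
  have hCC : (Finset.univ.filter
      (fun p : Fin n × Fin n =>
        (p.1 < p.2 ∧ (π * Equiv.swap a b) p.2 < (π * Equiv.swap a b) p.1)
          ∧ p ≠ (a, b))).card =
      (Finset.univ.filter
      (fun p : Fin n × Fin n => (p.1 < p.2 ∧ π p.2 < π p.1) ∧ p ≠ (a, b))).card := by
    apply Finset.card_nbij' (fun p => (Equiv.swap a b p.1, Equiv.swap a b p.2))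
      (fun p => (Equiv.swap a b p.1, Equiv.swap a b p.2))
    · intro p hp
      obtain ⟨-, ⟨hlt, hinv⟩, hne⟩ := Finset.mem_filter.mp hp
      refine Finset.mem_filter.mpr ⟨Finset.mem_univ _, ⟨?_, ?_⟩, ?_⟩
      · exact swap_pair_mono hab hlt
          (fun h => hne (Prod.ext h.1 h.2))
      · simpa [Equiv.Perm.mul_apply] using hinv
      · intro hc
        have h1 : Equiv.swap a b p.1 = a := congrArg Prod.fst hc
        have h2 : Equiv.swap a b p.2 = b := congrArg Prod.snd hc
        have hp1 : p.1 = b := by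
          have := congrArg (Equiv.swap a b) h1
          simpa [Equiv.swap_apply_left] using this
        have hp2 : p.2 = a := by
          have := congrArg (Equiv.swap a b) h2
          simpa [Equiv.swap_apply_right] using this
        rw [hp1, hp2] at hlt
        exact absurd haltb (not_lt_of_gt hlt)
    · intro p hp
      obtain ⟨-, ⟨hlt, hinv⟩, hne⟩ := Finset.mem_filter.mp hp
      refine Finset.mem_filter.mpr ⟨Finset.mem_univ _, ⟨?_, ?_⟩, ?_⟩
      · exact swap_pair_mono hab hlt
          (fun h => hne (Prod.ext h.1 h.2))
      · simpa [Equiv.Perm.mul_apply] using hinv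
      · intro hc
        have h1 : Equiv.swap a b p.1 = a := congrArg Prod.fst hc
        have h2 : Equiv.swap a b p.2 = b := congrArg Prod.snd hc
        have hp1 : p.1 = b := by
          have := congrArg (Equiv.swap a b) h1
          simpa [Equiv.swap_apply_left] using this
        have hp2 : p.2 = a := by
          have := congrArg (Equiv.swap a b) h2
          simpa [Equiv.swap_apply_right] using this
        rw [hp1, hp2] at hlt
        exact absurd haltb (not_lt_of_gt hlt)
    · intro p _; simp
    · intro p _; simp
  rw [invCount_split haltb (π * Equiv.swap a b), invCount_split haltb π, hCC]
  have h1 : (π * Equiv.swap a b) a = π b := by simp [Equiv.Perm.mul_apply]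
  have h2 : (π * Equiv.swap a b) b = π a := by simp [Equiv.Perm.mul_apply]
  rw [h1, h2]
  have hne2 : π a ≠ π b := fun h => absurd (π.injective h) (ne_of_lt haltb)
  rcases lt_or_gt_of_ne hne2 with h | h
  · rw [if_pos h, if_neg (not_lt_of_gt h), Nat.odd_iff]
    omega
  · rw [if_neg (not_lt_of_gt h), if_pos h, Nat.odd_iff]
    omega

/-- `S_n(1423, 1432)` is sign-balanced for every `n > 1`. -/
theorem stmt_17 (n : ℕ) (hn : 2 ≤ n) :
    SignBalanced (avoidSet n {p1423, p1432}) := by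
  classical
  set a : Fin n := ⟨n - 2, by omega⟩ with ha
  set b : Fin n := ⟨n - 1, by omega⟩ with hb
  have hab : (a : ℕ) + 1 = b := by simp [ha, hb]; omega
  have htop : ∀ x : Fin n, x ≤ b := by
    intro x
    rw [Fin.le_def]
    have := x.isLt
    simp [hb]
    omega
  set t : Equiv.Perm (Fin n) := Equiv.swap a b with ht
  have htt : ∀ ρ : Equiv.Perm (Fin n), ρ * t * t = ρ := by
    intro ρ
    rw [mul_assoc, ht, Equiv.swap_mul_self, mul_one]
  have hparity : ∀ ρ : Equiv.Perm (Fin n),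
      Even (invCount (ρ * t)) ↔ ¬ Even (invCount ρ) := by
    intro ρ
    have := invCount_parity_flip hab ρ
    rw [← ht, Nat.odd_iff] at this
    simp only [Nat.even_iff] at this ⊢
    omega
  have himg : (fun ρ => ρ * t) '' {π ∈ avoidSet n {p1423, p1432} | Even (invCount π)}
      = {π ∈ avoidSet n {p1423, p1432} | ¬ Even (invCount π)} := by
    ext ρ
    constructor
    · rintro ⟨π, ⟨hπS, hEv⟩, rfl⟩
      exact ⟨avoid_mul_swap hab htop hπS, fun hc => (hparity π).mp hc hEv⟩
    · rintro ⟨hρS, hOdd⟩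
      exact ⟨ρ * t, ⟨avoid_mul_swap hab htop hρS, (hparity ρ).mpr hOdd⟩, htt ρ⟩
  rw [SignBalanced, ← himg,
    Set.ncard_image_of_injective _ (mul_left_injective t)]
end

section
/- Let π = π_1⋯π_{k+1} ∈ S_{k+1} avoid both 1234 and 3214, and suppose π_5 = k+1 (the maximum is in position 5, k ≥ 4). Then the prefix π_1π_2π_3π_4 avoids both 123 and 321, and moreover either π_1 > π_2, π_3 > π_4, π_3 > π_1, π_4 > π_2, or π_1 < π_2, π_3 < π_4, π_3 < π_1, π_4 < π_2. -/
open Equiv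

theorem Fin.strictMono_snoc {α : Type*} [Preorder α] {m : ℕ} {f : Fin m → α} (hf : StrictMono f)
    {x : α} (hx : ∀ i, f i < x) : StrictMono (Fin.snoc (α := fun _ => α) f x) := by
  intro s t hst
  induction s using Fin.lastCases with
  | last => exact absurd hst (not_lt_of_ge (Fin.le_last t))
  | cast i =>
    induction t using Fin.lastCases with
    | last => simpa using hx i
    | cast j => simpa using hf (Fin.castSucc_lt_castSucc_iff.1 hst)

theorem contains_of_embedding_before_max {m n : ℕ} {π : Perm (Fin (n + 1))}
    {σ : Perm (Fin (m + 1))} (hσ : σ (Fin.last m) = Fin.last m) {p : Fin (n + 1)}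
    (hp : π p = Fin.last n) {f : Fin m → Fin (n + 1)} (hf : StrictMono f) (hfp : ∀ i, f i < p)
    (hord : ∀ s t, σ s.castSucc < σ t.castSucc ↔ π (f s) < π (f t)) : Contains π σ := by
  have hσ_lt (s : Fin m) : σ s.castSucc < Fin.last m :=
    (Fin.le_last _).lt_of_ne (hσ ▸ σ.injective.ne (Fin.castSucc_ne_last s))
  have hπ_lt (s : Fin m) : π (f s) < Fin.last n :=
    (Fin.le_last _).lt_of_ne (hp ▸ π.injective.ne (hfp s).ne)
  refine ⟨Fin.snoc (α := fun _ => Fin (n + 1)) f p, Fin.strictMono_snoc hf hfp, fun s t => ?_⟩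
  induction s using Fin.lastCases with
  | last =>
    induction t using Fin.lastCases with
    | last => simp
    | cast j => simp [hσ, hp, (hσ_lt j).not_gt, (hπ_lt j).not_gt]
  | cast i =>
    induction t using Fin.lastCases with
    | last => simp [hσ, hp, hσ_lt i, hπ_lt i]
    | cast j => simpa using hord i j

theorem contains_p1234_of_increasing_before_max {n : ℕ} {π : Perm (Fin (n + 1))}
    {a b c p : Fin (n + 1)} (hp : π p = Fin.last n) (hab : a < b) (hbc : b < c) (hcp : c < p)
    (h : π a < π b ∧ π b < π c) : Contains π p1234 := by
  have hpat : StrictMono fun s : Fin 3 => p1234 s.castSucc := by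
    rw [Fin.strictMono_iff_lt_succ]; decide
  have hπ : StrictMono fun s => π (![a, b, c] s) := by
    rw [Fin.strictMono_iff_lt_succ]; simp [Fin.forall_fin_two, h.1, h.2]
  refine contains_of_embedding_before_max (by decide) hp (f := ![a, b, c]) ?_ ?_
    fun s t => hpat.lt_iff_lt.trans hπ.lt_iff_lt.symm
  · simp [hab, hbc]
  · simp [Fin.forall_fin_succ, hcp, hbc.trans hcp, hab.trans (hbc.trans hcp)]

theorem contains_p3214_of_decreasing_before_max {n : ℕ} {π : Perm (Fin (n + 1))}
    {a b c p : Fin (n + 1)} (hp : π p = Fin.last n) (hab : a < b) (hbc : b < c) (hcp : c < p)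
    (h : π c < π b ∧ π b < π a) : Contains π p3214 := by
  have hpat : StrictAnti fun s : Fin 3 => p3214 s.castSucc := by
    rw [Fin.strictAnti_iff_succ_lt]; decide
  have hπ : StrictAnti fun s => π (![a, b, c] s) := by
    rw [Fin.strictAnti_iff_succ_lt]; simp [Fin.forall_fin_two, h.1, h.2]
  refine contains_of_embedding_before_max (by decide) hp (f := ![a, b, c]) ?_ ?_
    fun s t => hpat.lt_iff_gt.trans hπ.lt_iff_gt.symm
  · simp [hab, hbc]
  · simp [Fin.forall_fin_succ, hcp, hbc.trans hcp, hab.trans (hbc.trans hcp)]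

section NoMonotoneTriple

variable {α : Type*} [LinearOrder α] {x : Fin 4 → α}

theorem shape_of_no_monotone_triple_of_lt (hx : Function.Injective x)
    (hfree : ∀ a b c : Fin 4, a < b → b < c →
      ¬ (x a < x b ∧ x b < x c) ∧ ¬ (x c < x b ∧ x b < x a))
    (h10 : x 1 < x 0) : x 3 < x 2 ∧ x 0 < x 2 ∧ x 1 < x 3 := by
  have lt_or_gt (i j : Fin 4) (hij : i ≠ j) : x i < x j ∨ x j < x i := (hx.ne hij).lt_or_gt
  have t012 := hfree 0 1 2 (by decide) (by decide)
  have t013 := hfree 0 1 3 (by decide) (by decide)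
  have t023 := hfree 0 2 3 (by decide) (by decide)
  have t123 := hfree 1 2 3 (by decide) (by decide)
  have h02 : x 0 < x 2 := by
    refine (lt_or_gt 0 2 (by decide)).resolve_right fun h20 => ?_
    have h12 : x 1 < x 2 := (lt_or_gt 1 2 (by decide)).resolve_right fun h21 => t012.2 ⟨h21, h10⟩
    rcases lt_or_gt 2 3 (by decide) with h23 | h32
    · exact t123.1 ⟨h12, h23⟩
    · exact t023.2 ⟨h32, h20⟩
  have h32 : x 3 < x 2 := (lt_or_gt 3 2 (by decide)).resolve_right fun h23 => t023.1 ⟨h02, h23⟩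
  have h13 : x 1 < x 3 := (lt_or_gt 1 3 (by decide)).resolve_right fun h31 => t013.2 ⟨h31, h10⟩
  exact ⟨h32, h02, h13⟩

theorem shape_of_no_monotone_triple (hx : Function.Injective x)
    (hfree : ∀ a b c : Fin 4, a < b → b < c →
      ¬ (x a < x b ∧ x b < x c) ∧ ¬ (x c < x b ∧ x b < x a)) :
    (x 1 < x 0 ∧ x 3 < x 2 ∧ x 0 < x 2 ∧ x 1 < x 3) ∨
      (x 0 < x 1 ∧ x 2 < x 3 ∧ x 2 < x 0 ∧ x 3 < x 1) := by
  rcases (hx.ne (show (0 : Fin 4) ≠ 1 by decide)).lt_or_gt with h01 | h10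
  · exact .inr ⟨h01, shape_of_no_monotone_triple_of_lt (α := αᵒᵈ) hx
      (fun a b c hab hbc => have h := hfree a b c hab hbc
        ⟨fun ⟨hab', hbc'⟩ => h.2 ⟨hbc', hab'⟩, fun ⟨hcb, hba⟩ => h.1 ⟨hba, hcb⟩⟩) h01⟩
  · exact .inl ⟨h10, shape_of_no_monotone_triple_of_lt hx hfree h10⟩

end NoMonotoneTriple

/-- If `π ∈ S_{k+1}` (`k ≥ 4`) avoids `1234` and `3214` and its maximum is in
position `5` (index `4`), then the prefix `π₁π₂π₃π₄` avoids `123` and `321`,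
and either `π₁>π₂, π₃>π₄, π₃>π₁, π₄>π₂` or `π₁<π₂, π₃<π₄, π₃<π₁, π₄<π₂`. -/
theorem stmt_19 (k : ℕ) (hk : 4 ≤ k) (π : Equiv.Perm (Fin (k + 1)))
    (h1 : Avoids π p1234) (h2 : Avoids π p3214)
    (h5 : π ⟨4, by omega⟩ = Fin.last k) :
    (∀ a b c : Fin (k + 1), a < b → b < c → c.val < 4 →
      ¬ (π a < π b ∧ π b < π c) ∧ ¬ (π c < π b ∧ π b < π a)) ∧
    ((π ⟨1, by omega⟩ < π ⟨0, by omega⟩ ∧ π ⟨3, by omega⟩ < π ⟨2, by omega⟩ ∧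
      π ⟨0, by omega⟩ < π ⟨2, by omega⟩ ∧ π ⟨1, by omega⟩ < π ⟨3, by omega⟩) ∨
     (π ⟨0, by omega⟩ < π ⟨1, by omega⟩ ∧ π ⟨2, by omega⟩ < π ⟨3, by omega⟩ ∧
      π ⟨2, by omega⟩ < π ⟨0, by omega⟩ ∧ π ⟨3, by omega⟩ < π ⟨1, by omega⟩)) := by
  have hfree : ∀ a b c : Fin (k + 1), a < b → b < c → c.val < 4 →
      ¬ (π a < π b ∧ π b < π c) ∧ ¬ (π c < π b ∧ π b < π a) := fun a b c hab hbc hc =>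
    ⟨fun h => h1 (contains_p1234_of_increasing_before_max h5 hab hbc hc h),
     fun h => h2 (contains_p3214_of_decreasing_before_max h5 hab hbc hc h)⟩
  let ι : Fin 4 ↪o Fin (k + 1) := Fin.castLEOrderEmb (by omega)
  exact ⟨hfree, shape_of_no_monotone_triple (π.injective.comp ι.injective)
    fun a b c hab hbc => hfree (ι a) (ι b) (ι c) (ι.lt_iff_lt.2 hab) (ι.lt_iff_lt.2 hbc) c.isLt⟩
end
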